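/- arXiv:1002.2733 — 8 statements merged into one kernel-verified Lean document; each statement's English description precedes it below -/
import Mathlib

section
/- Let H be a separable complex Hilbert space and let {S(t)}_{t∈ℝ} be a family of closed linear operators in H. Then the maximally defined operator 𝒮 in L²(ℝ; H), given by (𝒮f)(t) = S(t)f(t), is a closed operator in L²(ℝ; H). -/
/-
Convergence in `L²` implies convergence in measure, so a convergent sequence in the graph has a
subsequence converging almost everywhere in both components at once. At almost every `t` the
pairs `(fₙ t, gₙ t)` then lie in the closed graph of `S t`, and so does their limit `(f t, g t)`.
-/

open MeasureTheory

noncomputable section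

variable {H : Type*} [NormedAddCommGroup H] [InnerProductSpace ℂ H]

/-- A family of vectors `g : ℝ → H` is weakly (Lebesgue) measurable if `t ↦ ⟪h, g t⟫` is
Lebesgue measurable for every `h ∈ H`. -/
def WeakMeasVec (g : ℝ → H) : Prop :=
  ∀ h : H, AEMeasurable (fun t : ℝ => (inner ℂ h (g t) : ℂ)) volume

/-- A family of bounded operators `A : ℝ → B(H)` is weakly measurable. -/
def WeakMeasOp (A : ℝ → H →L[ℂ] H) : Prop :=
  ∀ h k : H, AEMeasurable (fun t : ℝ => (inner ℂ h (A t k) : ℂ)) volume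

/-- A family of (in general unbounded) linear operators in `H` is weakly measurable if it
maps weakly measurable families of vectors in the domains to weakly measurable families. -/
def WeakMeasFam (T : ℝ → (H →ₗ.[ℂ] H)) : Prop :=
  ∀ f : (t : ℝ) → (T t).domain,
    WeakMeasVec (fun t => (f t : H)) → WeakMeasVec (fun t => T t (f t))

/-- `P` is the characteristic matrix of `T`: the `2 × 2` block operator matrix of the
orthogonal projection of `H ⊕ H` onto the graph of `T`. -/
def IsCharMatrix (T : H →ₗ.[ℂ] H) (P : Fin 2 → Fin 2 → (H →L[ℂ] H)) : Prop :=
  (∀ x y : H, (P 0 0 x + P 0 1 y, P 1 0 x + P 1 1 y) ∈ T.graph) ∧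
  (∀ x y : H, ∀ u : T.domain,
    (inner ℂ (x - (P 0 0 x + P 0 1 y)) (u : H) : ℂ)
      + (inner ℂ (y - (P 1 0 x + P 1 1 y)) (T u) : ℂ) = 0)

/-- N-measurability of a family of densely defined closed operators: the entries of the
characteristic matrices form weakly measurable families of bounded operators. -/
def NMeas (T : ℝ → (H →ₗ.[ℂ] H)) : Prop :=
  ∃ P : ℝ → Fin 2 → Fin 2 → (H →L[ℂ] H),
    (∀ t, IsCharMatrix (T t) (P t)) ∧ ∀ j k : Fin 2, WeakMeasOp (fun t => P t j k)

/-- `R = (T - z I)⁻¹ ∈ B(H)`, i.e. `z` lies in the resolvent set of `T` with resolvent `R`. -/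
def IsResolvent (T : H →ₗ.[ℂ] H) (z : ℂ) (R : H →L[ℂ] H) : Prop :=
  (∀ x : H, ∃ hx : R x ∈ T.domain, T ⟨R x, hx⟩ - z • R x = x) ∧
  (∀ y : T.domain, R (T y - z • (y : H)) = (y : H))

/-- `B = (T⋆ T + I)⁻¹ ∈ B(H)`. -/
def IsInvTstarTAddI [CompleteSpace H] (T : H →ₗ.[ℂ] H) (B : H →L[ℂ] H) : Prop :=
  ∀ x : H, ∃ (h1 : B x ∈ T.domain) (h2 : T ⟨B x, h1⟩ ∈ T.adjoint.domain),
    T.adjoint ⟨T ⟨B x, h1⟩, h2⟩ + B x = x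

/-- `C = T B`. -/
def IsTComp (T : H →ₗ.[ℂ] H) (B C : H →L[ℂ] H) : Prop :=
  ∀ x : H, ∃ h1 : B x ∈ T.domain, T ⟨B x, h1⟩ = C x

/-- `D = (T T⋆ + I)⁻¹ ∈ B(H)`. -/
def IsInvTTstarAddI [CompleteSpace H] (T : H →ₗ.[ℂ] H) (D : H →L[ℂ] H) : Prop :=
  ∀ x : H, ∃ (h1 : D x ∈ T.adjoint.domain) (h2 : T.adjoint ⟨D x, h1⟩ ∈ T.domain),
    T ⟨T.adjoint ⟨D x, h1⟩, h2⟩ + D x = x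

/-- `T` is a symmetric operator. -/
def IsSymmPMap (T : H →ₗ.[ℂ] H) : Prop :=
  ∀ x y : T.domain, (inner ℂ (x : H) (T y) : ℂ) = inner ℂ (T x) (y : H)

/-- `T` is an unbounded operator. -/
def UnboundedPMap (T : H →ₗ.[ℂ] H) : Prop :=
  ¬ ∃ C : ℝ, ∀ x : T.domain, ‖T x‖ ≤ C * ‖(x : H)‖

open Filter Topology

theorem LinearPMap.mk_mem_graph_iff {R E F : Type*} [Ring R] [AddCommGroup E] [Module R E]
    [AddCommGroup F] [Module R F] (f : E →ₗ.[R] F) (x : E) (y : F) :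
    (x, y) ∈ f.graph ↔ ∃ hx : x ∈ f.domain, f ⟨x, hx⟩ = y := by
  simp only [LinearPMap.mem_graph_iff, Subtype.exists]
  exact ⟨fun ⟨x', hx', hxx', hy⟩ => hxx' ▸ ⟨hx', hy⟩, fun ⟨hx, hy⟩ => ⟨x, hx, rfl, hy⟩⟩

namespace MeasureTheory

variable {α ι E F : Type*} {m : MeasurableSpace α} {μ : Measure α}

theorem TendstoInMeasure.prodMk [PseudoEMetricSpace E] [PseudoEMetricSpace F] {l : Filter ι}
    {f : ι → α → E} {g : ι → α → F} {f₀ : α → E} {g₀ : α → F}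
    (hf : TendstoInMeasure μ f l f₀) (hg : TendstoInMeasure μ g l g₀) :
    TendstoInMeasure μ (fun i x => (f i x, g i x)) l (fun x => (f₀ x, g₀ x)) := by
  intro ε hε
  have hsum := (hf ε hε).add (hg ε hε)
  rw [add_zero] at hsum
  refine tendsto_of_tendsto_of_tendsto_of_le_of_le tendsto_const_nhds hsum (fun _ => zero_le)
    fun i => ?_
  calc μ {x | ε ≤ edist (f i x, g i x) (f₀ x, g₀ x)}
      ≤ μ ({x | ε ≤ edist (f i x) (f₀ x)} ∪ {x | ε ≤ edist (g i x) (g₀ x)}) :=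
        measure_mono fun x hx => by
          simpa only [Set.mem_union, Set.mem_ofPred_eq, Prod.edist_eq, le_max_iff] using hx
    _ ≤ _ := measure_union_le _ _

theorem Lp.isClosed_setOf_ae_mem [NormedAddCommGroup E] [NormedAddCommGroup F]
    {p q : ENNReal} [Fact (1 ≤ p)] [Fact (1 ≤ q)] {C : α → Set (E × F)}
    (hC : ∀ x, IsClosed (C x)) :
    IsClosed {u : Lp E p μ × Lp F q μ | ∀ᵐ x ∂μ, (u.1 x, u.2 x) ∈ C x} := by
  refine isSeqClosed_iff_isClosed.mp fun u u₀ hu hlim => ?_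
  obtain ⟨ns, -, hns⟩ := ((tendstoInMeasure_of_tendsto_Lp hlim.fst_nhds).prodMk
    (tendstoInMeasure_of_tendsto_Lp hlim.snd_nhds)).exists_seq_tendsto_ae
  have hmem : ∀ᵐ x ∂μ, ∀ n, ((u n).1 x, (u n).2 x) ∈ C x := ae_all_iff.mpr hu
  filter_upwards [hns, hmem] with x hx hxn
  exact (hC x).mem_of_tendsto hx (Eventually.of_forall fun i => hxn (ns i))

end MeasureTheory

theorem stmt_0_general {H : Type*} [NormedAddCommGroup H] [InnerProductSpace ℂ H]
    (S : ℝ → (H →ₗ.[ℂ] H)) (hS : ∀ t, (S t).IsClosed)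
    (𝒮 : Lp H 2 (volume : Measure ℝ) →ₗ.[ℂ] Lp H 2 (volume : Measure ℝ))
    (h𝒮 : ∀ f g : Lp H 2 (volume : Measure ℝ),
      ((f, g) ∈ 𝒮.graph ↔
        ∀ᵐ t ∂(volume : Measure ℝ),
          ∃ hft : f t ∈ (S t).domain, S t ⟨f t, hft⟩ = g t)) :
    IsClosed (𝒮.graph : Set (Lp H 2 (volume : Measure ℝ) × Lp H 2 (volume : Measure ℝ))) := by
  have hgraph : (𝒮.graph : Set (Lp H 2 (volume : Measure ℝ) × Lp H 2 (volume : Measure ℝ))) =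
      {u | ∀ᵐ t ∂(volume : Measure ℝ), (u.1 t, u.2 t) ∈ (S t).graph} := by
    ext ⟨f, g⟩
    simp only [SetLike.mem_coe, h𝒮, Set.mem_ofPred_eq, LinearPMap.mk_mem_graph_iff]
  rw [hgraph]
  exact Lp.isClosed_setOf_ae_mem hS

/-- If each `S t` is a closed operator in the separable complex Hilbert space
`H`, then the maximally defined operator `𝒮` in `L²(ℝ; H)`, `(𝒮 f) t = S t (f t)`, is closed. -/
theorem stmt_0 {H : Type*} [NormedAddCommGroup H] [InnerProductSpace ℂ H]
    [CompleteSpace H] [TopologicalSpace.SeparableSpace H]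
    (S : ℝ → (H →ₗ.[ℂ] H)) (hS : ∀ t, (S t).IsClosed)
    (𝒮 : Lp H 2 (volume : Measure ℝ) →ₗ.[ℂ] Lp H 2 (volume : Measure ℝ))
    (h𝒮 : ∀ f g : Lp H 2 (volume : Measure ℝ),
      ((f, g) ∈ 𝒮.graph ↔
        ∀ᵐ t ∂(volume : Measure ℝ),
          ∃ hft : f t ∈ (S t).domain, S t ⟨f t, hft⟩ = g t)) :
    IsClosed (𝒮.graph : Set (Lp H 2 (volume : Measure ℝ) × Lp H 2 (volume : Measure ℝ))) :=
  stmt_0_general S hS 𝒮 h𝒮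

end
end

section
/- Let H be a separable complex Hilbert space and let {T(t)}_{t∈ℝ} be a family of densely defined closed linear operators in H. For each t ∈ ℝ let B(t), C(t) ∈ B(H) be the bounded operators with B(t) = (T(t)*T(t) + I)^{−1} (i.e., for every x ∈ H, B(t)x ∈ dom(T(t)), T(t)B(t)x ∈ dom(T(t)*), and T(t)*T(t)B(t)x + B(t)x = x) and C(t) = T(t)B(t). If the families {T(t)}_{t∈ℝ}, {B(t)}_{t∈ℝ}, and {C(t)}_{t∈ℝ} are weakly measurable, then the family {T(t)}_{t∈ℝ} is N-measurable; in particular, every bounded operator D(t) ∈ B(H) satisfying (for every x ∈ H) D(t)x ∈ dom(T(t)*), T(t)*D(t)x ∈ dom(T(t)), and T(t)T(t)*D(t)x + D(t)x = x, yields a weakly measurable family {D(t)}_{t∈ℝ}. -/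
open MeasureTheory

noncomputable section

variable {H : Type*} [NormedAddCommGroup H] [InnerProductSpace ℂ H]

/-!
Let `Q` be the orthogonal projection of `H ⊕ H` onto the graph of a closed densely defined `T`.
Since `Q` is self-adjoint and `Q (T⋆ T u + u, 0) = (u, T u)` for `u ∈ dom (T⋆ T)`, the first row of
the characteristic matrix is `(B⋆, C⋆)` with `B = (T⋆ T + I)⁻¹` and `C = T B`; its second row is
`T` applied to the first, so weak measurability of `{T t}` passes from the first row to the second.
Finally `Q (0, T T⋆ z + z) = (T⋆ z, T T⋆ z)` gives `P₁₁ = I - (T T⋆ + I)⁻¹`.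
-/

open scoped InnerProductSpace

namespace LinearPMap

variable {𝕜 E F : Type*} [RCLike 𝕜] [NormedAddCommGroup E] [InnerProductSpace 𝕜 E]
  [NormedAddCommGroup F] [InnerProductSpace 𝕜 F]

def graphL2 (T : E →ₗ.[𝕜] F) : Submodule 𝕜 (WithLp 2 (E × F)) :=
  T.graph.comap (WithLp.linearEquiv 2 𝕜 (E × F)).toLinearMap

theorem mem_graphL2 {T : E →ₗ.[𝕜] F} {v : WithLp 2 (E × F)} :
    v ∈ T.graphL2 ↔ ∃ hv : v.fst ∈ T.domain, T ⟨v.fst, hv⟩ = v.snd := by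
  change (v.fst, v.snd) ∈ T.graph ↔ _
  exact ⟨fun h => ⟨mem_domain_of_mem_graph h, ((image_iff _).mpr h).symm⟩,
    fun ⟨hv, h⟩ => (image_iff hv).mp h.symm⟩

theorem toLp_mem_graphL2 (T : E →ₗ.[𝕜] F) (u : T.domain) :
    WithLp.toLp 2 ((u : E), T u) ∈ T.graphL2 :=
  mem_graphL2.mpr ⟨u.2, rfl⟩

theorem IsClosed.isClosed_graphL2 {T : E →ₗ.[𝕜] F} (hc : T.IsClosed) :
    _root_.IsClosed (T.graphL2 : Set (WithLp 2 (E × F))) :=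
  _root_.IsClosed.preimage (WithLp.prodContinuousLinearEquiv 2 𝕜 E F).continuous hc

variable [CompleteSpace E] [CompleteSpace F]

theorem IsClosed.hasOrthogonalProjection_graphL2 {T : E →ₗ.[𝕜] F} (hc : T.IsClosed) :
    T.graphL2.HasOrthogonalProjection :=
  haveI : CompleteSpace T.graphL2 := hc.isClosed_graphL2.completeSpace_coe
  inferInstance

noncomputable def graphProj (T : E →ₗ.[𝕜] F) (hc : T.IsClosed) :
    WithLp 2 (E × F) →L[𝕜] WithLp 2 (E × F) :=
  haveI := hc.hasOrthogonalProjection_graphL2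
  T.graphL2.starProjection

variable {T : E →ₗ.[𝕜] F} (hc : T.IsClosed)

theorem graphProj_mem (v : WithLp 2 (E × F)) : T.graphProj hc v ∈ T.graphL2 :=
  haveI := hc.hasOrthogonalProjection_graphL2
  T.graphL2.starProjection_apply_mem v

theorem inner_sub_graphProj (v : WithLp 2 (E × F)) (u : T.domain) :
    ⟪v.fst - (T.graphProj hc v).fst, u⟫_𝕜 + ⟪v.snd - (T.graphProj hc v).snd, T u⟫_𝕜 = 0 := by
  have := hc.hasOrthogonalProjection_graphL2
  unfold graphProj
  have h := T.graphL2.starProjection_inner_eq_zero v _ (T.toLp_mem_graphL2 u)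
  simpa [WithLp.prod_inner_apply] using h

theorem graphProj_eq_of_mem {v w : WithLp 2 (E × F)} (hw : w ∈ T.graphL2)
    (horth : ∀ u : T.domain, ⟪v.fst - w.fst, u⟫_𝕜 + ⟪v.snd - w.snd, T u⟫_𝕜 = 0) :
    T.graphProj hc v = w := by
  have := hc.hasOrthogonalProjection_graphL2
  unfold graphProj
  refine Submodule.eq_starProjection_of_mem_of_inner_eq_zero hw fun u hu => ?_
  obtain ⟨hu, hTu⟩ := mem_graphL2.mp hu
  simpa [WithLp.prod_inner_apply, hTu] using horth ⟨u.fst, hu⟩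

variable (hd : Dense (T.domain : Set E))
include hd

theorem inner_graphProj_fst_adjoint_add (v : WithLp 2 (E × F)) (u : T.domain)
    (hTu : T u ∈ T.adjoint.domain) :
    ⟪(T.graphProj hc v).fst, T.adjoint ⟨T u, hTu⟩ + u⟫_𝕜 = ⟪v.fst, u⟫_𝕜 + ⟪v.snd, T u⟫_𝕜 := by
  obtain ⟨hw, hTw⟩ := mem_graphL2.mp (T.graphProj_mem hc v)
  have hadj :
      ⟪(T.graphProj hc v).fst, T.adjoint ⟨T u, hTu⟩⟫_𝕜 = ⟪(T.graphProj hc v).snd, T u⟫_𝕜 := by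
    rw [← inner_conj_symm, adjoint_isFormalAdjoint hd ⟨T u, hTu⟩ ⟨_, hw⟩, hTw, inner_conj_symm]
  have horth := T.inner_sub_graphProj hc v u
  rw [inner_add_right, hadj]
  rw [inner_sub_left, inner_sub_left] at horth
  linear_combination -horth

theorem graphProj_toLp_zero_add (z : T.adjoint.domain) (hz : T.adjoint z ∈ T.domain) :
    T.graphProj hc (WithLp.toLp 2 (0, T ⟨_, hz⟩ + z)) =
      WithLp.toLp 2 (T.adjoint z, T ⟨_, hz⟩) := by
  refine T.graphProj_eq_of_mem hc (T.toLp_mem_graphL2 ⟨_, hz⟩) fun u => ?_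
  simp [adjoint_isFormalAdjoint hd z u]

end LinearPMap

section WeakMeasurability

variable {H : Type*} [NormedAddCommGroup H] [InnerProductSpace ℂ H]

theorem WeakMeasOp.adjoint [CompleteSpace H] {A : ℝ → H →L[ℂ] H} (hA : WeakMeasOp A) :
    WeakMeasOp fun t => ContinuousLinearMap.adjoint (A t) := by
  intro h k
  have hconj (t : ℝ) :
      ⟪h, ContinuousLinearMap.adjoint (A t) k⟫_ℂ = starRingEnd ℂ ⟪k, A t h⟫_ℂ := by
    rw [ContinuousLinearMap.adjoint_inner_right, inner_conj_symm]
  simp only [hconj]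
  exact Complex.continuous_conj.measurable.comp_aemeasurable (hA k h)

theorem WeakMeasOp.one_sub {A : ℝ → H →L[ℂ] H} (hA : WeakMeasOp A) :
    WeakMeasOp fun t => 1 - A t := by
  intro h k
  simp only [sub_apply, one_apply_eq_self, inner_sub_right]
  exact aemeasurable_const.sub (hA h k)

theorem WeakMeasFam.weakMeasOp_of_isTComp {T : ℝ → (H →ₗ.[ℂ] H)} (hT : WeakMeasFam T)
    {A A' : ℝ → H →L[ℂ] H} (hA : WeakMeasOp A) (hTA : ∀ t, IsTComp (T t) (A t) (A' t)) :
    WeakMeasOp A' := by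
  intro h x
  choose hdom hval using fun t => hTA t x
  simpa only [hval] using hT (fun t => ⟨A t x, hdom t⟩) (fun h => hA h x) h

end WeakMeasurability

namespace LinearPMap

variable {H : Type*} [NormedAddCommGroup H] [InnerProductSpace ℂ H] [CompleteSpace H]

noncomputable def charMatrix (T : H →ₗ.[ℂ] H) (hc : T.IsClosed) : Fin 2 → Fin 2 → (H →L[ℂ] H) :=
  let e := WithLp.prodContinuousLinearEquiv 2 ℂ H H
  let Q := (e : WithLp 2 (H × H) →L[ℂ] H × H) ∘L T.graphProj hc ∘L (e.symm : H × H →L[ℂ] _)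
  ![![.fst ℂ H H ∘L Q ∘L .inl ℂ H H, .fst ℂ H H ∘L Q ∘L .inr ℂ H H],
    ![.snd ℂ H H ∘L Q ∘L .inl ℂ H H, .snd ℂ H H ∘L Q ∘L .inr ℂ H H]]

variable {T : H →ₗ.[ℂ] H} (hc : T.IsClosed)

@[simp]
theorem charMatrix_zero_zero_apply (x : H) :
    T.charMatrix hc 0 0 x = (T.graphProj hc (WithLp.toLp 2 (x, 0))).fst := rfl

@[simp]
theorem charMatrix_zero_one_apply (y : H) :
    T.charMatrix hc 0 1 y = (T.graphProj hc (WithLp.toLp 2 (0, y))).fst := rfl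

@[simp]
theorem charMatrix_one_one_apply (y : H) :
    T.charMatrix hc 1 1 y = (T.graphProj hc (WithLp.toLp 2 (0, y))).snd := rfl

theorem isCharMatrix_charMatrix : IsCharMatrix T (T.charMatrix hc) := by
  have hsplit (x y : H) : T.graphProj hc (WithLp.toLp 2 (x, y)) =
      T.graphProj hc (WithLp.toLp 2 (x, 0)) + T.graphProj hc (WithLp.toLp 2 (0, y)) := by
    rw [← ContinuousLinearMap.map_add, ← WithLp.toLp_add, Prod.mk_add_mk, add_zero, zero_add]
  refine ⟨fun x y => ?_, fun x y u => ?_⟩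
  · have hmem := T.graphProj_mem hc (WithLp.toLp 2 (x, y))
    rw [hsplit] at hmem
    exact hmem
  · have horth := T.inner_sub_graphProj hc (WithLp.toLp 2 (x, y)) u
    rw [hsplit] at horth
    exact horth

theorem isTComp_charMatrix (k : Fin 2) :
    IsTComp T (T.charMatrix hc 0 k) (T.charMatrix hc 1 k) := by
  fin_cases k <;> exact fun x => mem_graphL2.mp (T.graphProj_mem hc _)

variable (hd : Dense (T.domain : Set H))
include hd

theorem charMatrix_zero_zero_eq_adjoint {B : H →L[ℂ] H} (hB : IsInvTstarTAddI T B) :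
    T.charMatrix hc 0 0 = ContinuousLinearMap.adjoint B := by
  refine (ContinuousLinearMap.eq_adjoint_iff _ _).mpr fun x h => ?_
  obtain ⟨hBh, hTBh, hBeq⟩ := hB h
  simpa [hBeq] using
    T.inner_graphProj_fst_adjoint_add hc hd (WithLp.toLp 2 (x, 0)) ⟨B h, hBh⟩ hTBh

theorem charMatrix_zero_one_eq_adjoint {B C : H →L[ℂ] H} (hB : IsInvTstarTAddI T B)
    (hC : IsTComp T B C) : T.charMatrix hc 0 1 = ContinuousLinearMap.adjoint C := by
  refine (ContinuousLinearMap.eq_adjoint_iff _ _).mpr fun y h => ?_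
  obtain ⟨hBh, hTBh, hBeq⟩ := hB h
  obtain ⟨_, hCeq⟩ := hC h
  have key := T.inner_graphProj_fst_adjoint_add hc hd (WithLp.toLp 2 (0, y)) ⟨B h, hBh⟩ hTBh
  rw [hBeq, hCeq] at key
  simpa using key

theorem charMatrix_one_one_eq_one_sub {D : H →L[ℂ] H} (hD : IsInvTTstarAddI T D) :
    T.charMatrix hc 1 1 = 1 - D := by
  ext k
  obtain ⟨hDk, hTDk, hDeq⟩ := hD k
  have hQ := T.graphProj_toLp_zero_add hc hd ⟨D k, hDk⟩ hTDk
  rw [hDeq] at hQ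
  simp [hQ, eq_sub_of_add_eq hDeq]

end LinearPMap

theorem stmt_1_general {H : Type*} [NormedAddCommGroup H] [InnerProductSpace ℂ H]
    [CompleteSpace H]
    (T : ℝ → (H →ₗ.[ℂ] H))
    (hdense : ∀ t, Dense ((T t).domain : Set H)) (hclosed : ∀ t, (T t).IsClosed)
    (B C : ℝ → (H →L[ℂ] H))
    (hB : ∀ t, IsInvTstarTAddI (T t) (B t))
    (hC : ∀ t, IsTComp (T t) (B t) (C t))
    (hTmeas : WeakMeasFam T) (hBmeas : WeakMeasOp B) (hCmeas : WeakMeasOp C) :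
    NMeas T ∧
      ∀ D : ℝ → (H →L[ℂ] H), (∀ t, IsInvTTstarAddI (T t) (D t)) → WeakMeasOp D := by
  set P := fun t => (T t).charMatrix (hclosed t)
  have hrow0 : ∀ k, WeakMeasOp fun t => P t 0 k := Fin.forall_fin_two.mpr
    ⟨by simpa only [P, LinearPMap.charMatrix_zero_zero_eq_adjoint _ (hdense _) (hB _)]
        using hBmeas.adjoint,
      by simpa only [P, LinearPMap.charMatrix_zero_one_eq_adjoint _ (hdense _) (hB _) (hC _)]
        using hCmeas.adjoint⟩
  have hrow1 (k : Fin 2) : WeakMeasOp fun t => P t 1 k :=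
    hTmeas.weakMeasOp_of_isTComp (hrow0 k) fun t => LinearPMap.isTComp_charMatrix _ k
  refine ⟨⟨P, fun t => LinearPMap.isCharMatrix_charMatrix _,
    Fin.forall_fin_two.mpr ⟨hrow0, hrow1⟩⟩, fun D hD => ?_⟩
  simpa only [P, LinearPMap.charMatrix_one_one_eq_one_sub _ (hdense _) (hD _), sub_sub_cancel]
    using (hrow1 1).one_sub

/-- If `{T t}`, `{B t = (T t⋆ T t + I)⁻¹}` and `{C t = T t • B t}` are weakly
measurable, then `{T t}` is N-measurable; in particular any family
`{D t = (T t T t⋆ + I)⁻¹}` is weakly measurable. -/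
theorem stmt_1 {H : Type*} [NormedAddCommGroup H] [InnerProductSpace ℂ H]
    [CompleteSpace H] [TopologicalSpace.SeparableSpace H]
    (T : ℝ → (H →ₗ.[ℂ] H))
    (hdense : ∀ t, Dense ((T t).domain : Set H)) (hclosed : ∀ t, (T t).IsClosed)
    (B C : ℝ → (H →L[ℂ] H))
    (hB : ∀ t, IsInvTstarTAddI (T t) (B t))
    (hC : ∀ t, IsTComp (T t) (B t) (C t))
    (hTmeas : WeakMeasFam T) (hBmeas : WeakMeasOp B) (hCmeas : WeakMeasOp C) :
    NMeas T ∧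
      ∀ D : ℝ → (H →L[ℂ] H), (∀ t, IsInvTTstarAddI (T t) (D t)) → WeakMeasOp D :=
  stmt_1_general T hdense hclosed B C hB hC hTmeas hBmeas hCmeas
end
end

section
/- Let H be a separable complex Hilbert space and let {T(t)}_{t∈ℝ} be a family of self-adjoint operators in H that is N-measurable. Then for every z ∈ ℂ∖ℝ the family of resolvents {(T(t) − zI)^{−1}}_{t∈ℝ} is weakly measurable, i.e., t ↦ ⟨h, (T(t) − zI)^{−1} k⟩_H is Lebesgue measurable for all h, k ∈ H. -/
open MeasureTheory

noncomputable section

variable {H : Type*} [NormedAddCommGroup H] [InnerProductSpace ℂ H]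

/-!
At `z = ±i` the resolvent can be read off the characteristic matrix: `P₀₀ = (1 + T²)⁻¹` and
`P₁₀ = T (1 + T²)⁻¹`, so `(T - z)⁻¹ = P₁₀ + z P₀₀` whenever `z² = -1`. From a point `z₀` with a
weakly measurable resolvent family, the resolvent identity gives
`R(z) = R(z₀) ∑ₙ ((z - z₀) R(z₀))ⁿ` for `|z - z₀| < |Im z₀| ≤ ‖R(z₀)‖⁻¹`, and weak
measurability survives products (expand in a Hilbert basis, countable by separability) and
norm-convergent series. The points reached this way form a relatively clopen subset of each
open half-plane, hence all of it.
-/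

open LinearPMap

local notation "⟪" x ", " y "⟫" => @inner ℂ _ _ x y

theorem Orthonormal.countable_index {𝕜 E ι : Type*} [RCLike 𝕜] [NormedAddCommGroup E]
    [InnerProductSpace 𝕜 E] [TopologicalSpace.SeparableSpace E] {v : ι → E}
    (hv : Orthonormal 𝕜 v) : Countable ι := by
  refine Pairwise.countable_of_isOpen_disjoint (s := fun i => Metric.ball (v i) (1 / 2))
    (fun i j hij => Metric.ball_disjoint_ball ?_) (fun _ => Metric.isOpen_ball)
    (fun i => ⟨v i, Metric.mem_ball_self (by norm_num)⟩)
  have hdist : dist (v i) (v j) ^ 2 = 2 := by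
    rw [dist_eq_norm, @norm_sub_sq 𝕜, hv.2 hij]
    simp only [hv.1 i, hv.1 j, one_pow, _root_.map_zero, mul_zero, sub_zero]
    norm_num
  nlinarith [dist_nonneg (x := v i) (y := v j)]

theorem aemeasurable_of_hasSum {α β ι : Type*} [MeasurableSpace α] {μ : Measure α}
    [TopologicalSpace β] [TopologicalSpace.PseudoMetrizableSpace β] [MeasurableSpace β]
    [BorelSpace β] [AddCommMonoid β] [MeasurableAdd₂ β] [Countable ι] {f : ι → α → β}
    {g : α → β} (hf : ∀ i, AEMeasurable (f i) μ) (hg : ∀ᵐ x ∂μ, HasSum (fun i => f i x) (g x)) :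
    AEMeasurable g μ := by
  classical
  exact aemeasurable_of_tendsto_metrizable_ae Filter.atTop
    (fun s => Finset.aemeasurable_fun_sum s fun i _ => hf i) hg

namespace WeakMeasOp

theorem of_hasSum {ι : Type*} [Countable ι] {A : ι → ℝ → H →L[ℂ] H} {B : ℝ → H →L[ℂ] H}
    (hA : ∀ i, WeakMeasOp (A i)) (hB : ∀ t, HasSum (fun i => A i t) (B t)) :
    WeakMeasOp B := by
  intro h k
  refine aemeasurable_of_hasSum (fun i => hA i h k) (Filter.Eventually.of_forall fun t => ?_)
  simpa using (hB t).mapL ((innerSL ℂ h).comp (ContinuousLinearMap.apply ℂ H k))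

theorem one : WeakMeasOp (fun _ => (1 : H →L[ℂ] H)) :=
  fun _ _ => aemeasurable_const

theorem add {A B : ℝ → H →L[ℂ] H} (hA : WeakMeasOp A) (hB : WeakMeasOp B) :
    WeakMeasOp (fun t => A t + B t) := by
  intro h k
  simp only [_root_.add_apply, inner_add_right]
  exact (hA h k).add (hB h k)

theorem const_smul {A : ℝ → H →L[ℂ] H} (hA : WeakMeasOp A) (c : ℂ) :
    WeakMeasOp (fun t => c • A t) := by
  intro h k
  simp only [_root_.smul_apply, inner_smul_right]
  exact (hA h k).const_mul c

variable [CompleteSpace H] [TopologicalSpace.SeparableSpace H]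

theorem mul {A B : ℝ → H →L[ℂ] H} (hA : WeakMeasOp A) (hB : WeakMeasOp B) :
    WeakMeasOp (fun t => A t * B t) := by
  intro h k
  obtain ⟨w, b, -⟩ := exists_hilbertBasis ℂ H
  have : Countable w := b.orthonormal.countable_index
  refine aemeasurable_of_hasSum (fun i => (hA h (b i)).mul (hB (b i) k))
    (Filter.Eventually.of_forall fun t => ?_)
  have hsum := b.hasSum_inner_mul_inner (ContinuousLinearMap.adjoint (A t) h) (B t k)
  simp only [ContinuousLinearMap.adjoint_inner_left] at hsum
  exact hsum

theorem pow {A : ℝ → H →L[ℂ] H} (hA : WeakMeasOp A) (n : ℕ) :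
    WeakMeasOp (fun t => A t ^ n) := by
  induction n with
  | zero => simpa using one
  | succ n ih => simpa [pow_succ] using ih.mul hA

end WeakMeasOp

section Resolvent

variable {T : H →ₗ.[ℂ] H} {z z₀ : ℂ} {R : H →L[ℂ] H}

theorem IsResolvent.unique {R' : H →L[ℂ] H} (hR : IsResolvent T z R)
    (hR' : IsResolvent T z R') : R = R' := by
  ext x
  obtain ⟨hx, hTx⟩ := hR'.1 x
  simpa [hTx] using hR.2 ⟨R' x, hx⟩

theorem IsSymmPMap.abs_im_mul_norm_le (hT : IsSymmPMap T) (z : ℂ) (v : T.domain) :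
    |z.im| * ‖(v : H)‖ ≤ ‖T v - z • (v : H)‖ := by
  have hreal : (⟪(v : H), T v⟫).im = 0 := by
    have h := congrArg Complex.im ((inner_conj_symm (T v) (v : H)).trans (hT v v).symm)
    simp only [Complex.conj_im] at h
    linarith
  have him : (⟪(v : H), T v - z • (v : H)⟫).im = -(z.im * ‖(v : H)‖ ^ 2) := by
    rw [inner_sub_right, inner_smul_right, inner_self_eq_norm_sq_to_K]
    simp [hreal, Complex.mul_im, ← Complex.ofReal_pow]
  have hle : |z.im| * ‖(v : H)‖ ^ 2 ≤ ‖(v : H)‖ * ‖T v - z • (v : H)‖ := by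
    calc |z.im| * ‖(v : H)‖ ^ 2 = |(⟪(v : H), T v - z • (v : H)⟫).im| := by
          rw [him, abs_neg, abs_mul, abs_pow, abs_norm]
      _ ≤ ‖⟪(v : H), T v - z • (v : H)⟫‖ := Complex.abs_im_le_norm _
      _ ≤ ‖(v : H)‖ * ‖T v - z • (v : H)‖ := norm_inner_le_norm _ _
  rcases (norm_nonneg (v : H)).eq_or_lt with hv | hv
  · simp [← hv]
  · nlinarith

/-- Off the real axis, `T - z` is injective on the domain of a symmetric `T`, so a right
inverse is already the resolvent. -/
theorem IsSymmPMap.isResolvent_of_rightInverse (hT : IsSymmPMap T) (hz : z.im ≠ 0)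
    (h : ∀ x : H, ∃ hx : R x ∈ T.domain, T ⟨R x, hx⟩ - z • R x = x) :
    IsResolvent T z R := by
  refine ⟨h, fun y => ?_⟩
  obtain ⟨hx, hTx⟩ := h (T y - z • (y : H))
  set u : T.domain := ⟨R (T y - z • (y : H)), hx⟩
  have hker : T (u - y) - z • ((u - y : T.domain) : H) = 0 := by
    rw [LinearPMap.map_sub, Submodule.coe_sub, smul_sub, sub_sub_sub_comm, hTx, sub_self]
  have hbound := hT.abs_im_mul_norm_le z (u - y)
  rw [hker, norm_zero] at hbound
  have hnorm : ‖((u - y : T.domain) : H)‖ = 0 :=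
    le_antisymm (nonpos_of_mul_nonpos_right hbound (abs_pos.mpr hz)) (norm_nonneg _)
  exact sub_eq_zero.mp (norm_eq_zero.mp hnorm)

theorem IsResolvent.norm_le (hT : IsSymmPMap T) (hz : z.im ≠ 0) (hR : IsResolvent T z R) :
    ‖R‖ ≤ |z.im|⁻¹ := by
  have hpos := abs_pos.mpr hz
  refine ContinuousLinearMap.opNorm_le_bound _ (by positivity) fun x => ?_
  obtain ⟨hx, hTx⟩ := hR.1 x
  have hbound := hT.abs_im_mul_norm_le z ⟨R x, hx⟩
  rw [hTx] at hbound
  rw [inv_mul_eq_div, le_div_iff₀ hpos, mul_comm]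
  exact hbound

variable [CompleteSpace H]

theorem IsResolvent.of_norm_smul_lt_one (hT : IsSymmPMap T) (hR : IsResolvent T z₀ R)
    (hz : z.im ≠ 0) (hc : ‖(z - z₀) • R‖ < 1) :
    IsResolvent T z (R * ∑' n : ℕ, ((z - z₀) • R) ^ n) := by
  refine hT.isResolvent_of_rightInverse hz fun x => ?_
  set W := ∑' n : ℕ, ((z - z₀) • R) ^ n
  have hW : W x - (z - z₀) • R (W x) = x := by
    simpa [sub_mul] using congrArg (fun S : H →L[ℂ] H => S x) (mul_neg_geom_series _ hc)
  obtain ⟨hx, hTx⟩ := hR.1 (W x)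
  refine ⟨hx, ?_⟩
  calc T ⟨R (W x), hx⟩ - z • R (W x)
      = (T ⟨R (W x), hx⟩ - z₀ • R (W x)) - (z - z₀) • R (W x) := by rw [sub_smul]; abel
    _ = x := by rw [hTx, hW]

theorem IsSelfAdjoint.isSymmPMap (hT : IsSelfAdjoint T) : IsSymmPMap T := by
  have hle : T ≤ T† := le_of_eq hT.symm
  intro u v
  rw [LinearPMap.apply_comp_inclusion hle u]
  exact (adjoint_isFormalAdjoint hT.dense_domain (Submodule.inclusion hle.1 u) v).symm

theorem IsSelfAdjoint.exists_mem_domain_of_inner (hT : IsSelfAdjoint T) {y w : H}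
    (h : ∀ u : T.domain, ⟪w, (u : H)⟫ = ⟪y, T u⟫) : ∃ hy : y ∈ T.domain, T ⟨y, hy⟩ = w := by
  have hy : y ∈ T†.domain := mem_adjoint_domain_of_exists y ⟨w, h⟩
  have hTy : T† ⟨y, hy⟩ = w := adjoint_apply_eq hT.dense_domain ⟨y, hy⟩ h
  have hle : T† ≤ T := le_of_eq hT
  exact ⟨hle.1 hy, hTy ▸ (hle.2 rfl).symm⟩

theorem IsSelfAdjoint.isResolvent_of_isCharMatrix (hT : IsSelfAdjoint T)
    {P : Fin 2 → Fin 2 → H →L[ℂ] H} (hP : IsCharMatrix T P) (hz : z * z = -1) :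
    IsResolvent T z (P 1 0 + z • P 0 0) := by
  have hzim : z.im ≠ 0 := by
    intro h
    have := congrArg Complex.re hz
    simp only [Complex.mul_re, h, mul_zero, sub_zero, Complex.neg_re, Complex.one_re] at this
    nlinarith [sq_nonneg z.re]
  refine hT.isSymmPMap.isResolvent_of_rightInverse hzim fun x => ?_
  have hgraph := hP.1 x 0
  simp only [_root_.map_zero, add_zero] at hgraph
  obtain ⟨a, ha, hTa⟩ := (T.mem_graph_iff).mp hgraph
  have hb : ∀ u : T.domain, ⟪x - P 0 0 x, (u : H)⟫ = ⟪P 1 0 x, T u⟫ := by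
    intro u
    have h := hP.2 x 0 u
    simp only [_root_.map_zero, add_zero, zero_sub, inner_neg_left] at h
    linear_combination h
  obtain ⟨hbmem, hTb⟩ := hT.exists_mem_domain_of_inner hb
  set b : T.domain := ⟨P 1 0 x, hbmem⟩
  have hy : ((b + z • a : T.domain) : H) = (P 1 0 + z • P 0 0) x := by simp [b, ha]
  refine ⟨hy ▸ (b + z • a).2, ?_⟩
  rw [show (⟨_, _⟩ : T.domain) = b + z • a from Subtype.ext hy.symm, LinearPMap.map_add,
    LinearPMap.map_smul, hTa, hTb, ← hy, Submodule.coe_add, Submodule.coe_smul, ha, smul_add,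
    smul_smul, hz]
  module

end Resolvent

theorem Complex.im_ne_zero_of_norm_sub_lt {z z₀ : ℂ} (h : ‖z - z₀‖ < |z₀.im|) : z.im ≠ 0 := by
  intro h0
  have := Complex.abs_im_le_norm (z - z₀)
  rw [Complex.sub_im, h0, zero_sub, abs_neg] at this
  linarith

def HasWeakMeasResolvent (T : ℝ → H →ₗ.[ℂ] H) (z : ℂ) : Prop :=
  ∃ R : ℝ → H →L[ℂ] H, (∀ t, IsResolvent (T t) z (R t)) ∧ WeakMeasOp R

section Family

variable [CompleteSpace H] {T : ℝ → H →ₗ.[ℂ] H} {z : ℂ}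

theorem NMeas.hasWeakMeasResolvent (hT : ∀ t, IsSelfAdjoint (T t)) (hN : NMeas T)
    (hz : z * z = -1) : HasWeakMeasResolvent T z := by
  obtain ⟨P, hP, hPmeas⟩ := hN
  exact ⟨_, fun t => (hT t).isResolvent_of_isCharMatrix (hP t) hz,
    (hPmeas 1 0).add ((hPmeas 0 0).const_smul z)⟩

variable [TopologicalSpace.SeparableSpace H]

theorem HasWeakMeasResolvent.of_norm_sub_lt (hT : ∀ t, IsSymmPMap (T t)) {z₀ : ℂ}
    (hz₀ : z₀.im ≠ 0) (hz : ‖z - z₀‖ < |z₀.im|) (h : HasWeakMeasResolvent T z₀) :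
    HasWeakMeasResolvent T z := by
  obtain ⟨R, hR, hRmeas⟩ := h
  have hpos := abs_pos.mpr hz₀
  have hc : ∀ t, ‖(z - z₀) • R t‖ < 1 := fun t =>
    calc ‖(z - z₀) • R t‖ ≤ ‖z - z₀‖ * |z₀.im|⁻¹ := (norm_smul_le _ _).trans
          (mul_le_mul_of_nonneg_left ((hR t).norm_le (hT t) hz₀) (norm_nonneg _))
      _ < |z₀.im| * |z₀.im|⁻¹ := mul_lt_mul_of_pos_right hz (inv_pos.mpr hpos)
      _ = 1 := mul_inv_cancel₀ hpos.ne'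
  have hgeom : WeakMeasOp fun t => ∑' n : ℕ, ((z - z₀) • R t) ^ n :=
    WeakMeasOp.of_hasSum (fun n => (hRmeas.const_smul (z - z₀)).pow n)
      fun t => (summable_geometric_of_norm_lt_one (hc t)).hasSum
  exact ⟨_, fun t => (hR t).of_norm_smul_lt_one (hT t) (Complex.im_ne_zero_of_norm_sub_lt hz)
    (hc t), hRmeas.mul hgeom⟩

theorem HasWeakMeasResolvent.of_isPreconnected (hT : ∀ t, IsSymmPMap (T t)) {s : Set ℂ}
    (hs : IsPreconnected s) (him : ∀ w ∈ s, w.im ≠ 0) {z₁ : ℂ} (hz₁ : z₁ ∈ s)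
    (h₁ : HasWeakMeasResolvent T z₁) (hz : z ∈ s) : HasWeakMeasResolvent T z := by
  set u := {w : ℂ | w.im ≠ 0 ∧ HasWeakMeasResolvent T w}
  have hu : IsOpen u := by
    refine Metric.isOpen_iff.mpr fun w ⟨hw, hgood⟩ => ⟨|w.im|, abs_pos.mpr hw, fun v hv => ?_⟩
    rw [Metric.mem_ball, dist_eq_norm] at hv
    exact ⟨Complex.im_ne_zero_of_norm_sub_lt hv, hgood.of_norm_sub_lt hT hw hv⟩
  have hclosed : closure u ∩ s ⊆ u := by
    rintro v ⟨hv, hvs⟩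
    have hpos := abs_pos.mpr (him v hvs)
    obtain ⟨w, ⟨hw, hgood⟩, hvw⟩ := Metric.mem_closure_iff.mp hv (|v.im| / 2) (by positivity)
    rw [dist_eq_norm] at hvw
    -- `|Im w| > |Im v| / 2 > ‖v - w‖`
    have hstep : ‖v - w‖ < |w.im| := by
      have := Complex.abs_im_le_norm (v - w)
      rw [Complex.sub_im] at this
      linarith [abs_sub_abs_le_abs_sub v.im w.im]
    exact ⟨him v hvs, hgood.of_norm_sub_lt hT hw hstep⟩
  exact (hs.subset_of_closure_inter_subset hu ⟨z₁, hz₁, him z₁ hz₁, h₁⟩ hclosed hz).2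

end Family

theorem stmt_3_general {H : Type*} [NormedAddCommGroup H] [InnerProductSpace ℂ H]
    [CompleteSpace H] [TopologicalSpace.SeparableSpace H]
    (T : ℝ → (H →ₗ.[ℂ] H))
    (hsa : ∀ t, IsSelfAdjoint (T t))
    (hN : NMeas T) :
    ∀ z : ℂ, z.im ≠ 0 → ∀ R : ℝ → (H →L[ℂ] H),
      (∀ t, IsResolvent (T t) z (R t)) → WeakMeasOp R := by
  intro z hz R hR
  have hsymm : ∀ t, IsSymmPMap (T t) := fun t => (hsa t).isSymmPMap
  obtain ⟨R', hR', hR'meas⟩ : HasWeakMeasResolvent T z := by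
    rcases hz.lt_or_gt with hneg | hpos
    · exact .of_isPreconnected hsymm (convex_halfSpace_im_lt 0).isPreconnected
        (fun w hw => hw.ne) (z₁ := -Complex.I) (by simp)
        (hN.hasWeakMeasResolvent hsa (by simp)) hneg
    · exact .of_isPreconnected hsymm (convex_halfSpace_im_gt 0).isPreconnected
        (fun w hw => hw.ne') (z₁ := Complex.I) (by simp)
        (hN.hasWeakMeasResolvent hsa (by simp)) hpos
  rwa [funext fun t => (hR t).unique (hR' t)]

/-- For an N-measurable family of self-adjoint operators, all resolvent families
at non-real `z` are weakly measurable. -/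
theorem stmt_3 {H : Type*} [NormedAddCommGroup H] [InnerProductSpace ℂ H]
    [CompleteSpace H] [TopologicalSpace.SeparableSpace H]
    (T : ℝ → (H →ₗ.[ℂ] H))
    (hdense : ∀ t, Dense ((T t).domain : Set H))
    (hsa : ∀ t, IsSelfAdjoint (T t))
    (hN : NMeas T) :
    ∀ z : ℂ, z.im ≠ 0 → ∀ R : ℝ → (H →L[ℂ] H),
      (∀ t, IsResolvent (T t) z (R t)) → WeakMeasOp R :=
  stmt_3_general T hsa hN

end
end

section
/- Let H be a separable complex Hilbert space, let T₀ and T₁ be densely defined, closed, unbounded, symmetric operators in H with T₀ ⊊ T₁ (T₀ ⊆ T₁ and T₀ ≠ T₁), and let 𝔈 ⊆ ℝ be a set that is not Lebesgue measurable. Define T̃(t) = T₀ for t ∈ 𝔈 and T̃(t) = T₁ for t ∈ ℝ∖𝔈. Then the family {T̃(t)}_{t∈ℝ} is weakly measurable but not N-measurable. -/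
open MeasureTheory

noncomputable section

variable {H : Type*} [NormedAddCommGroup H] [InnerProductSpace ℂ H]

/-!
Every `T t` is a restriction of the densely defined symmetric `T₁`, so `⟪h, T t (f t)⟫` equals
`⟪T₁ h, f t⟫` for `h` in the dense domain of `T₁`, and weak measurability survives pointwise
limits. Conversely, pick `v ∈ dom T₁ \ dom T₀`: the graph projection fixes `(v, T₁ v)` for
`t ∉ 𝔈`, and maps it to one and the same point `p ≠ (v, T₁ v)` for all `t ∈ 𝔈`. Pairing with
`p - (v, T₁ v)` gives a weakly measurable scalar function taking different constant values
on `𝔈` and on its complement, so `𝔈` would be measurable.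
-/

open scoped InnerProductSpace

def blockApply (P : Fin 2 → Fin 2 → (H →L[ℂ] H)) (x y : H) : H × H :=
  (P 0 0 x + P 0 1 y, P 1 0 x + P 1 1 y)

lemma LinearPMap.eq_of_mem_graph_of_orthogonal {T : H →ₗ.[ℂ] H} {x y : H} {p q : H × H}
    (hp : p ∈ T.graph) (hq : q ∈ T.graph)
    (hpx : ∀ u : T.domain, ⟪x - p.1, (u : H)⟫_ℂ + ⟪y - p.2, T u⟫_ℂ = 0)
    (hqx : ∀ u : T.domain, ⟪x - q.1, (u : H)⟫_ℂ + ⟪y - q.2, T u⟫_ℂ = 0) :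
    p = q := by
  obtain ⟨w, hw₁, hw₂⟩ := T.mem_graph_iff.mp (T.graph.sub_mem hp hq)
  have hp' := hpx w
  have hq' := hqx w
  rw [hw₁, hw₂, Prod.fst_sub, Prod.snd_sub] at hp' hq'
  have e₁ : ⟪p.1 - q.1, p.1 - q.1⟫_ℂ = ⟪x - q.1, p.1 - q.1⟫_ℂ - ⟪x - p.1, p.1 - q.1⟫_ℂ := by
    rw [← inner_sub_left, sub_sub_sub_cancel_left]
  have e₂ : ⟪p.2 - q.2, p.2 - q.2⟫_ℂ = ⟪y - q.2, p.2 - q.2⟫_ℂ - ⟪y - p.2, p.2 - q.2⟫_ℂ := by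
    rw [← inner_sub_left, sub_sub_sub_cancel_left]
  have hsum : (‖p.1 - q.1‖ ^ 2 + ‖p.2 - q.2‖ ^ 2 : ℝ) = 0 := by
    rw [inner_self_eq_norm_sq_to_K] at e₁ e₂
    exact_mod_cast (by linear_combination e₁ + e₂ + hq' - hp' :
      ((‖p.1 - q.1‖ : ℂ) ^ 2 + (‖p.2 - q.2‖ : ℂ) ^ 2 = 0))
  obtain ⟨h₁, h₂⟩ := (add_eq_zero_iff_of_nonneg (sq_nonneg _) (sq_nonneg _)).mp hsum
  exact Prod.ext (sub_eq_zero.mp (norm_eq_zero.mp (pow_eq_zero_iff two_ne_zero |>.mp h₁)))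
    (sub_eq_zero.mp (norm_eq_zero.mp (pow_eq_zero_iff two_ne_zero |>.mp h₂)))

namespace IsCharMatrix

variable {T : H →ₗ.[ℂ] H} {P Q : Fin 2 → Fin 2 → (H →L[ℂ] H)}

lemma blockApply_eq (hP : IsCharMatrix T P) (hQ : IsCharMatrix T Q) (x y : H) :
    blockApply P x y = blockApply Q x y :=
  T.eq_of_mem_graph_of_orthogonal (hP.1 x y) (hQ.1 x y) (hP.2 x y) (hQ.2 x y)

lemma blockApply_eq_self (hP : IsCharMatrix T P) {x y : H} (hxy : (x, y) ∈ T.graph) :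
    blockApply P x y = (x, y) :=
  T.eq_of_mem_graph_of_orthogonal (hP.1 x y) hxy (hP.2 x y) (by simp)

lemma blockApply_ne_self (hP : IsCharMatrix T P) {x y : H} (hxy : (x, y) ∉ T.graph) :
    blockApply P x y ≠ (x, y) :=
  fun h => hxy (h ▸ hP.1 x y)

end IsCharMatrix

lemma aemeasurable_inner_blockApply {P : ℝ → Fin 2 → Fin 2 → (H →L[ℂ] H)}
    (hP : ∀ j k : Fin 2, WeakMeasOp (fun t => P t j k)) (x y : H) (d : WithLp 2 (H × H)) :
    AEMeasurable (fun t => ⟪d, WithLp.toLp 2 (blockApply (P t) x y)⟫_ℂ) volume := by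
  simp only [WithLp.prod_inner_apply, blockApply, inner_add_right]
  exact ((hP 0 0 d.fst x).add (hP 0 1 d.fst y)).add ((hP 1 0 d.snd x).add (hP 1 1 d.snd y))

open scoped Classical in
lemma nullMeasurableSet_of_aemeasurable_ite {α β : Type*} [MeasurableSpace α]
    [MeasurableSpace β] [MeasurableSingletonClass β] {μ : Measure α} {s : Set α} {a b : β}
    (hab : a ≠ b) (h : AEMeasurable (fun t => if t ∈ s then a else b) μ) :
    NullMeasurableSet s μ := by
  convert h.nullMeasurableSet_preimage (measurableSet_singleton a)
  ext t
  by_cases ht : t ∈ s <;> simp [ht, hab.symm]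

lemma weakMeasVec_of_dense {g : ℝ → H} {D : Set H} (hD : Dense D)
    (hg : ∀ h ∈ D, AEMeasurable (fun t => ⟪h, g t⟫_ℂ) volume) : WeakMeasVec g := by
  intro h
  obtain ⟨u, huD, hu⟩ := mem_closure_iff_seq_limit.mp (hD h)
  exact aemeasurable_of_tendsto_metrizable_ae' (fun n => hg (u n) (huD n))
    (ae_of_all _ fun t => hu.inner tendsto_const_nhds)

lemma weakMeasFam_of_forall_le {T : ℝ → (H →ₗ.[ℂ] H)} {S : H →ₗ.[ℂ] H}
    (hd : Dense (S.domain : Set H)) (hs : IsSymmPMap S) (hle : ∀ t, T t ≤ S) :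
    WeakMeasFam T := by
  intro f hf
  let g : ∀ t, S.domain := fun t => ⟨f t, (hle t).1 (f t).2⟩
  have hTS : ∀ t, T t (f t) = S (g t) := fun t => (hle t).2 rfl
  refine weakMeasVec_of_dense hd fun h hh => ?_
  simp only [hTS]
  exact (hf (S ⟨h, hh⟩)).congr (ae_of_all _ fun t => (hs ⟨h, hh⟩ (g t)).symm)

open scoped Classical in
lemma not_nMeas_ite {T₀ T₁ : H →ₗ.[ℂ] H} (hle : T₀ ≤ T₁) (hne : T₀ ≠ T₁) {E : Set ℝ}
    (hE : ¬ NullMeasurableSet E volume) : ¬ NMeas (fun t => if t ∈ E then T₀ else T₁) := by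
  rintro ⟨P, hchar, hP⟩
  obtain ⟨t₀, ht₀⟩ : E.Nonempty :=
    Set.nonempty_iff_ne_empty.mpr fun h => hE (h ▸ nullMeasurableSet_empty)
  obtain ⟨v, hv₁, hv₀⟩ := SetLike.exists_of_lt
    (lt_of_le_of_ne hle.1 fun hd => hne (LinearPMap.eq_of_le_of_domain_eq hle hd))
  set y := T₁ ⟨v, hv₁⟩
  have hchar₀ : ∀ t ∈ E, IsCharMatrix T₀ (P t) := fun t ht => by simpa [ht] using hchar t
  have hchar₁ : ∀ t ∉ E, IsCharMatrix T₁ (P t) := fun t ht => by simpa [ht] using hchar t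
  have hvy₀ : (v, y) ∉ T₀.graph := fun h => hv₀ (T₀.mem_domain_of_mem_graph h)
  have hvy₁ : (v, y) ∈ T₁.graph := T₁.mem_graph ⟨v, hv₁⟩
  set p := WithLp.toLp 2 (blockApply (P t₀) v y)
  set z := WithLp.toLp 2 (v, y)
  have hpz : p ≠ z := fun h =>
    (hchar₀ t₀ ht₀).blockApply_ne_self hvy₀ (WithLp.toLp_injective 2 h)
  refine hE (nullMeasurableSet_of_aemeasurable_ite (a := ⟪p - z, p⟫_ℂ) (b := ⟪p - z, z⟫_ℂ) ?_
    ((aemeasurable_inner_blockApply hP v y (p - z)).congr (ae_of_all _ fun t => ?_)))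
  · intro h
    have hzero : ⟪p - z, p - z⟫_ℂ = 0 := by rw [inner_sub_right, h, sub_self]
    exact hpz (sub_eq_zero.mp (inner_self_eq_zero.mp hzero))
  · by_cases ht : t ∈ E
    · simp only [ht, if_true, (hchar₀ t ht).blockApply_eq (hchar₀ t₀ ht₀), p]
    · simp only [ht, if_false, (hchar₁ t ht).blockApply_eq_self hvy₁, z]

open scoped Classical in
theorem stmt_7_general {H : Type*} [NormedAddCommGroup H] [InnerProductSpace ℂ H]
    (T₀ T₁ : H →ₗ.[ℂ] H)
    (hd₁ : Dense (T₁.domain : Set H)) (hs₁ : IsSymmPMap T₁)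
    (hle : T₀ ≤ T₁) (hne : T₀ ≠ T₁)
    (𝔈 : Set ℝ) (h𝔈 : ¬ NullMeasurableSet 𝔈 (volume : Measure ℝ)) :
    WeakMeasFam (fun t => if t ∈ 𝔈 then T₀ else T₁) ∧
      ¬ NMeas (fun t => if t ∈ 𝔈 then T₀ else T₁) :=
  ⟨weakMeasFam_of_forall_le hd₁ hs₁ fun t => by split_ifs; exacts [hle, le_rfl],
    not_nMeas_ite hle hne h𝔈⟩

open scoped Classical in
/-- For densely defined, closed, unbounded, symmetric `T₀ ⊊ T₁` and a
non-Lebesgue-measurable set `𝔈 ⊆ ℝ`, the family equal to `T₀` on `𝔈` and `T₁` off `𝔈`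
is weakly measurable but not N-measurable. -/
theorem stmt_7 {H : Type*} [NormedAddCommGroup H] [InnerProductSpace ℂ H]
    [CompleteSpace H] [TopologicalSpace.SeparableSpace H]
    (T₀ T₁ : H →ₗ.[ℂ] H)
    (hd₀ : Dense (T₀.domain : Set H)) (hc₀ : T₀.IsClosed) (hs₀ : IsSymmPMap T₀)
    (hu₀ : UnboundedPMap T₀)
    (hd₁ : Dense (T₁.domain : Set H)) (hc₁ : T₁.IsClosed) (hs₁ : IsSymmPMap T₁)
    (hu₁ : UnboundedPMap T₁)
    (hle : T₀ ≤ T₁) (hne : T₀ ≠ T₁)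
    (𝔈 : Set ℝ) (h𝔈 : ¬ NullMeasurableSet 𝔈 (volume : Measure ℝ)) :
    WeakMeasFam (fun t => if t ∈ 𝔈 then T₀ else T₁) ∧
      ¬ NMeas (fun t => if t ∈ 𝔈 then T₀ else T₁) :=
  stmt_7_general T₀ T₁ hd₁ hs₁ hle hne 𝔈 h𝔈

end
end

section
/- Let H be a complex Hilbert space and let T₀ and T₁ be densely defined closed linear operators in H with T₀ ⊊ T₁ (T₀ ⊆ T₁ and T₀ ≠ T₁). For j = 0, 1 let B_j ∈ B(H) be the bounded operator with B_j = (T_j*T_j + I)^{−1}, i.e., for every x ∈ H: B_j x ∈ dom(T_j), T_j B_j x ∈ dom(T_j*), and T_j*T_j B_j x + B_j x = x. Then B₀ ≠ B₁, and moreover there exists a nonzero h ∈ H such that ⟨h, B₀ h⟩_H ≠ ⟨h, B₁ h⟩_H. -/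
open MeasureTheory

noncomputable section

variable {H : Type*} [NormedAddCommGroup H] [InnerProductSpace ℂ H]

/-!
If `B₀ = B₁ = B`, the vectors `(B x, T₁ B x)` lie in the graph of `T₀`, and the equation
`T₁⋆ T₁ B x + B x = x` says that their graph inner product with any `(u, T₁ u)` is `⟪x, u⟫`.
Hence no nonzero vector of the graph of `T₁` is orthogonal to the graph of `T₀`; as the latter
is closed, the two graphs coincide, contradicting `T₀ ≠ T₁`. The quadratic forms of `B₀` and
`B₁` then differ by polarization.
-/

open scoped InnerProductSpace

namespace LinearPMap

variable {𝕜 E F : Type*} [RCLike 𝕜] [NormedAddCommGroup E] [InnerProductSpace 𝕜 E]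
  [NormedAddCommGroup F] [InnerProductSpace 𝕜 F] [CompleteSpace E] [CompleteSpace F]

theorem eq_of_le_of_graph_inner_eq_zero {S T : E →ₗ.[𝕜] F} (hS : S.IsClosed) (hle : S ≤ T)
    (horth : ∀ u : T.domain, (∀ v : S.domain, ⟪(v : E), u⟫_𝕜 + ⟪S v, T u⟫_𝕜 = 0) → u = 0) :
    S = T := by
  let G : Submodule 𝕜 (WithLp 2 (E × F)) :=
    S.graph.comap (WithLp.linearEquiv 2 𝕜 (E × F)).toLinearMap
  have : CompleteSpace G :=
    (hS.preimage (WithLp.prod_continuous_ofLp 2 E F)).completeSpace_coe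
  refine le_antisymm hle (le_of_le_graph fun q hq => ?_)
  obtain ⟨p, hp, w, hw, hq_eq⟩ := G.exists_add_mem_mem_orthogonal (WithLp.toLp 2 q)
  have hwT : WithLp.ofLp w ∈ T.graph := by
    rw [eq_sub_of_add_eq' hq_eq.symm, WithLp.ofLp_sub, WithLp.ofLp_toLp]
    exact sub_mem hq (le_graph_of_le hle hp)
  obtain ⟨u, hu⟩ := T.mem_graph_iff'.mp hwT
  have hu0 : u = 0 := horth u fun v => by
    simpa [← hu] using hw (WithLp.toLp 2 ((v : E), S v)) (S.mem_graph v)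
  have hw0 : w = 0 := by
    rw [← WithLp.toLp_ofLp (p := 2) w, ← hu, hu0]
    simp
  rw [hw0, add_zero] at hq_eq
  rw [← hq_eq] at hp
  exact hp

end LinearPMap

theorem ContinuousLinearMap.exists_inner_self_ne_of_ne {S T : H →L[ℂ] H} (h : S ≠ T) :
    ∃ x : H, x ≠ 0 ∧ ⟪x, S x⟫_ℂ ≠ ⟪x, T x⟫_ℂ := by
  by_contra! hST
  refine h (ContinuousLinearMap.coe_injective <| (ext_inner_map _ _).mp fun x => ?_)
  rcases eq_or_ne x 0 with rfl | hx
  · simp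
  · rw [← inner_conj_symm, coe_coe, hST x hx, inner_conj_symm, coe_coe]

namespace IsInvTstarTAddI

variable [CompleteSpace H]

theorem graph_inner_eq {T : H →ₗ.[ℂ] H} {B : H →L[ℂ] H} (hd : Dense (T.domain : Set H))
    (hB : IsInvTstarTAddI T B) (x : H) (hx : B x ∈ T.domain) (u : T.domain) :
    ⟪B x, (u : H)⟫_ℂ + ⟪T ⟨B x, hx⟩, T u⟫_ℂ = ⟪x, (u : H)⟫_ℂ := by
  obtain ⟨_, hTx, hx_eq⟩ := hB x
  conv_rhs => rw [← hx_eq]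
  rw [inner_add_left, LinearPMap.adjoint_isFormalAdjoint hd ⟨_, hTx⟩ u, add_comm]

theorem eq_of_le {T₀ T₁ : H →ₗ.[ℂ] H} (hd₁ : Dense (T₁.domain : Set H)) (hc₀ : T₀.IsClosed)
    (hle : T₀ ≤ T₁) {B : H →L[ℂ] H} (hB₀ : IsInvTstarTAddI T₀ B) (hB₁ : IsInvTstarTAddI T₁ B) :
    T₀ = T₁ := by
  refine LinearPMap.eq_of_le_of_graph_inner_eq_zero hc₀ hle fun u hu => ?_
  have hx₀ (x : H) : B x ∈ T₀.domain := (hB₀ x).1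
  refine Subtype.ext (ext_inner_left ℂ fun x => ?_)
  rw [ZeroMemClass.coe_zero, inner_zero_right, ← hB₁.graph_inner_eq hd₁ x (hle.1 (hx₀ x)),
    ← hle.2 (x := ⟨B x, hx₀ x⟩) rfl]
  exact hu ⟨B x, hx₀ x⟩

end IsInvTstarTAddI

theorem stmt_8_general {H : Type*} [NormedAddCommGroup H] [InnerProductSpace ℂ H] [CompleteSpace H]
    (T₀ T₁ : H →ₗ.[ℂ] H)
    (hc₀ : T₀.IsClosed)
    (hd₁ : Dense (T₁.domain : Set H))
    (hle : T₀ ≤ T₁) (hne : T₀ ≠ T₁)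
    (B₀ B₁ : H →L[ℂ] H)
    (hB₀ : IsInvTstarTAddI T₀ B₀) (hB₁ : IsInvTstarTAddI T₁ B₁) :
    B₀ ≠ B₁ ∧ ∃ h : H, h ≠ 0 ∧ (inner ℂ h (B₀ h) : ℂ) ≠ (inner ℂ h (B₁ h) : ℂ) := by
  have hB : B₀ ≠ B₁ := by
    rintro rfl
    exact hne (hB₀.eq_of_le hd₁ hc₀ hle hB₁)
  exact ⟨hB, ContinuousLinearMap.exists_inner_self_ne_of_ne hB⟩

/-- If `T₀ ⊊ T₁` are densely defined closed operators and
`B_j = (T_j⋆ T_j + I)⁻¹`, then `B₀ ≠ B₁`, and indeed `⟪h, B₀ h⟫ ≠ ⟪h, B₁ h⟫` for some `h ≠ 0`. -/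
theorem stmt_8 {H : Type*} [NormedAddCommGroup H] [InnerProductSpace ℂ H] [CompleteSpace H]
    (T₀ T₁ : H →ₗ.[ℂ] H)
    (hd₀ : Dense (T₀.domain : Set H)) (hc₀ : T₀.IsClosed)
    (hd₁ : Dense (T₁.domain : Set H)) (hc₁ : T₁.IsClosed)
    (hle : T₀ ≤ T₁) (hne : T₀ ≠ T₁)
    (B₀ B₁ : H →L[ℂ] H)
    (hB₀ : IsInvTstarTAddI T₀ B₀) (hB₁ : IsInvTstarTAddI T₁ B₁) :
    B₀ ≠ B₁ ∧ ∃ h : H, h ≠ 0 ∧ (inner ℂ h (B₀ h) : ℂ) ≠ (inner ℂ h (B₁ h) : ℂ) :=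
  stmt_8_general T₀ T₁ hc₀ hd₁ hle hne B₀ B₁ hB₀ hB₁

end
end

section
/- Let H be a separable complex Hilbert space, let A₀ be a densely defined closed symmetric operator in H, let A₁ be a self-adjoint extension of A₀ (A₀ ⊆ A₁ = A₁*), and let e ∈ dom(A₀*) be a unit vector with A₀* e = i e. Set T₁ = A₁ + iI with dom(T₁) = dom(A₁), K = I + ⟨e,·⟩_H e ∈ B(H), and T₂ = K T₁ with dom(T₂) = dom(T₁). Let 𝔈 ⊆ ℝ be a set that is not Lebesgue measurable, and define T̃(t) = T₁* for t ∈ 𝔈 and T̃(t) = T₂* for t ∈ ℝ∖𝔈. Then {T̃(t)}_{t∈ℝ} is a family of densely defined closed operators that is weakly measurable, but the family of adjoints {T̃(t)*}_{t∈ℝ} is not weakly measurable. -/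
/-!
For `x ∈ dom A₀` we have `⟪e, T₁ x⟫ = ⟪e, A₀ x⟫ + i⟪e, x⟫ = ⟪A₀* e, x⟫ + i⟪e, x⟫ = 0`, so `K` fixes
`T₁ x` and both `T₁` and `T₂` extend the restriction `S` of `T₁` to the dense subspace `dom A₀`.
Hence `⟪h, T̃(t) f(t)⟫ = ⟪S h, f(t)⟫` for every `h ∈ dom A₀`, independently of `t`, and weak
measurability follows by density.

On the other hand `T̃(t)*` extends `T₁` on `𝔈` and `T₂ = K T₁` off `𝔈`. Since `A₁` is
self-adjoint, `i` is not an eigenvalue of `A₁* = A₁`, so `ran (A₁ + i)` is not orthogonal to `e`: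
some `x₀` has `⟪e, T₁ x₀⟫ ≠ 0`. Then `t ↦ ⟪e, T̃(t)* x₀⟫` equals `⟪e, T₁ x₀⟫` exactly on `𝔈` and
`2 ⟪e, T₁ x₀⟫` off it, so it is not measurable.
-/

open MeasureTheory

noncomputable section

variable {H : Type*} [NormedAddCommGroup H] [InnerProductSpace ℂ H]

open LinearPMap
open scoped ComplexConjugate InnerProductSpace
open Complex (I)

theorem LinearPMap.domRestrict_le_of_eq_comp {R E F : Type*} [Ring R] [AddCommGroup E]
    [Module R E] [AddCommGroup F] [Module R F] {T S : E →ₗ.[R] F} {K : F → F}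
    (hdom : S.domain = T.domain)
    (hS : ∀ (x : E) (hx : x ∈ S.domain) (hx' : x ∈ T.domain), S ⟨x, hx⟩ = K (T ⟨x, hx'⟩))
    {D : Submodule R E} (hD : ∀ x : T.domain, (x : E) ∈ D → K (T x) = T x) :
    T.domRestrict D ≤ S :=
  ⟨fun _ hx => hdom.ge hx.2, fun x y hxy => by
    have hy : (y : E) ∈ T.domain := hdom.le y.2
    refine ((domRestrict_le : T.domRestrict D ≤ T).2 (y := ⟨y, hy⟩) hxy).trans ?_
    rw [hS y y.2 hy, hD ⟨y, hy⟩ (hxy ▸ x.2.1)]⟩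

theorem inner_add_I_smul (e v x : H) : ⟪e, v + I • x⟫_ℂ = ⟪e, v⟫_ℂ - ⟪I • e, x⟫_ℂ := by
  rw [inner_add_right, inner_smul_right, inner_smul_left, Complex.conj_I]
  ring

theorem LinearPMap.IsFormalAdjoint.eq_zero_of_apply_eq_I_smul {A : H →ₗ.[ℂ] H}
    (hA : A.IsFormalAdjoint A) {x : A.domain} (hx : A x = I • (x : H)) : (x : H) = 0 := by
  have h := hA x x
  rw [hx, inner_smul_left, inner_smul_right, Complex.conj_I] at h
  have hxx : ⟪(x : H), x⟫_ℂ = 0 := by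
    linear_combination (I / 2) * h + ⟪(x : H), x⟫_ℂ * Complex.I_sq
  exact inner_self_eq_zero.mp hxx

section RankOnePerturbation

variable {K : H →L[ℂ] H} {e : H}

theorem isSymmetric_of_eq_add_inner_smul (hK : ∀ x, K x = x + ⟪e, x⟫_ℂ • e) :
    (K : H →ₗ[ℂ] H).IsSymmetric := by
  intro x y
  simp only [ContinuousLinearMap.coe_coe, hK, inner_add_left, inner_add_right, inner_smul_left,
    inner_smul_right, inner_conj_symm]
  ring

theorem inner_apply_of_eq_add_inner_smul (hK : ∀ x, K x = x + ⟪e, x⟫_ℂ • e) (he : ⟪e, e⟫_ℂ = 1)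
    (x : H) : ⟪e, K x⟫_ℂ = 2 * ⟪e, x⟫_ℂ := by
  rw [hK, inner_add_right, inner_smul_right, he]
  ring

theorem surjective_of_eq_add_inner_smul (hK : ∀ x, K x = x + ⟪e, x⟫_ℂ • e) (he : ⟪e, e⟫_ℂ = 1) :
    Function.Surjective K := fun y => ⟨y - (⟪e, y⟫_ℂ / 2) • e, by
  rw [hK, inner_sub_right, inner_smul_right, he]
  module⟩

end RankOnePerturbation

theorem weakMeasFam_of_dense {S : ℝ → H →ₗ.[ℂ] H} {D : Set H} (hD : Dense D)
    (hS : ∀ h ∈ D, ∃ g : H, ∀ t (x : (S t).domain), ⟪h, S t x⟫_ℂ = ⟪g, (x : H)⟫_ℂ) :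
    WeakMeasFam S := by
  intro f hf h
  obtain ⟨u, hu, hlim⟩ := mem_closure_iff_seq_limit.mp (hD h)
  refine aemeasurable_of_tendsto_metrizable_ae' (f := fun n t => ⟪u n, S t (f t)⟫_ℂ)
    (fun n => ?_) (.of_forall fun t => hlim.inner tendsto_const_nhds)
  obtain ⟨g, hg⟩ := hS (u n) (hu n)
  simp only [hg]
  exact hf g

theorem WeakMeasFam.mono {T T' : ℝ → H →ₗ.[ℂ] H} (h : WeakMeasFam T')
    (hle : ∀ t, T t ≤ T' t) : WeakMeasFam T := fun f hf => by
  have heq : (fun t => T t (f t)) = fun t => T' t ⟨f t, (hle t).1 (f t).2⟩ :=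
    funext fun t => (hle t).2 rfl
  rw [heq]
  exact h _ hf

theorem nullMeasurableSet_of_weakMeasFam_ite {s : Set ℝ} [DecidablePred (· ∈ s)]
    {U V : H →ₗ.[ℂ] H} (hUV : WeakMeasFam fun t => if t ∈ s then U else V) {e x : H}
    (hU : x ∈ U.domain) (hV : x ∈ V.domain) (hne : ⟪e, U ⟨x, hU⟩⟫_ℂ ≠ ⟪e, V ⟨x, hV⟩⟫_ℂ) :
    NullMeasurableSet s volume := by
  have hx : ∀ t, x ∈ (if t ∈ s then U else V).domain := fun t => by
    split_ifs
    exacts [hU, hV]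
  have hval : ∀ t, ⟪e, (if t ∈ s then U else V) ⟨x, hx t⟩⟫_ℂ
      = if t ∈ s then ⟪e, U ⟨x, hU⟩⟫_ℂ else ⟪e, V ⟨x, hV⟩⟫_ℂ := fun t => by
    by_cases ht : t ∈ s
    · have hUt : (if t ∈ s then U else V) = U := if_pos ht
      rw [hUt.le.2 (y := ⟨x, hU⟩) rfl, if_pos ht]
    · have hVt : (if t ∈ s then U else V) = V := if_neg ht
      rw [hVt.le.2 (y := ⟨x, hV⟩) rfl, if_neg ht]
  have hmeas := hUV (fun t => ⟨x, hx t⟩)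
    (fun h => (aemeasurable_const : AEMeasurable (fun _ => ⟪h, x⟫_ℂ) volume)) e
  simp only [hval] at hmeas
  have hpre : (fun t => if t ∈ s then ⟪e, U ⟨x, hU⟩⟫_ℂ else ⟪e, V ⟨x, hV⟩⟫_ℂ) ⁻¹'
      {⟪e, U ⟨x, hU⟩⟫_ℂ} = s := by
    ext t
    by_cases ht : t ∈ s <;> simp [ht, hne.symm]
  exact hpre ▸ hmeas.nullMeasurable (measurableSet_singleton _)

section Adjoint

variable [CompleteSpace H]

namespace LinearPMap

theorem inner_adjoint_apply {T : H →ₗ.[ℂ] H} (hT : Dense (T.domain : Set H)) (x : T.domain)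
    (y : T†.domain) : ⟪(x : H), T† y⟫_ℂ = ⟪T x, (y : H)⟫_ℂ :=
  ((adjoint_isFormalAdjoint hT).symm x y).symm

theorem le_adjoint_adjoint {T : H →ₗ.[ℂ] H} (hT : Dense (T.domain : Set H))
    (hT' : Dense (T†.domain : Set H)) : T ≤ T†† :=
  IsFormalAdjoint.le_adjoint hT' (adjoint_isFormalAdjoint hT)

theorem inner_add_I_smul_eq_zero_of_adjoint_eq {A : H →ₗ.[ℂ] H}
    (hA : Dense (A.domain : Set H)) {e : H} (he : e ∈ A†.domain) (heq : A† ⟨e, he⟩ = I • e)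
    (x : A.domain) : ⟪e, A x + I • (x : H)⟫_ℂ = 0 := by
  rw [inner_add_I_smul, ← heq, adjoint_isFormalAdjoint hA, sub_self]

theorem domain_le_adjoint_domain_of_eq_add_smul {A T : H →ₗ.[ℂ] H} (hA : A.IsFormalAdjoint A)
    (z : ℂ) (hdom : T.domain = A.domain)
    (hT : ∀ (x : H) (hx : x ∈ T.domain) (hx' : x ∈ A.domain), T ⟨x, hx⟩ = A ⟨x, hx'⟩ + z • x) :
    A.domain ≤ T†.domain := fun y hy =>
  mem_adjoint_domain_of_exists _ ⟨A ⟨y, hy⟩ + conj z • y, fun x => by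
    rw [hT x x.2 (hdom.le x.2), inner_add_left, inner_add_right, inner_smul_left,
      inner_smul_right, Complex.conj_conj, hA ⟨y, hy⟩ ⟨x, hdom.le x.2⟩]⟩

theorem preimage_adjoint_domain_subset_of_eq_comp {T S : H →ₗ.[ℂ] H}
    (hT : Dense (T.domain : Set H)) {K : H →L[ℂ] H} (hK : (K : H →ₗ[ℂ] H).IsSymmetric)
    (hdom : S.domain = T.domain)
    (hS : ∀ (x : H) (hx : x ∈ S.domain) (hx' : x ∈ T.domain), S ⟨x, hx⟩ = K (T ⟨x, hx'⟩)) :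
    K ⁻¹' T†.domain ⊆ S†.domain := fun y hy =>
  mem_adjoint_domain_of_exists _ ⟨T† ⟨K y, hy⟩, fun x => by
    refine (adjoint_isFormalAdjoint hT ⟨K y, hy⟩ ⟨x, hdom.le x.2⟩).trans ?_
    rw [hS x x.2 (hdom.le x.2)]
    exact hK y _⟩

theorem dense_adjoint_domain_of_eq_comp {T S : H →ₗ.[ℂ] H} (hT : Dense (T.domain : Set H))
    (hT' : Dense (T†.domain : Set H)) {K : H →L[ℂ] H} (hK : (K : H →ₗ[ℂ] H).IsSymmetric)
    (hKsurj : Function.Surjective K) (hdom : S.domain = T.domain)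
    (hS : ∀ (x : H) (hx : x ∈ S.domain) (hx' : x ∈ T.domain), S ⟨x, hx⟩ = K (T ⟨x, hx'⟩)) :
    Dense (S†.domain : Set H) :=
  (hT'.preimage (K.isOpenMap hKsurj)).mono
    (preimage_adjoint_domain_subset_of_eq_comp hT hK hdom hS)

end LinearPMap

theorem weakMeasFam_adjoint_of_le {S : H →ₗ.[ℂ] H} (hS : Dense (S.domain : Set H))
    {T : ℝ → H →ₗ.[ℂ] H} (hT : ∀ t, S ≤ T t) : WeakMeasFam fun t => (T t)† :=
  weakMeasFam_of_dense hS fun h hh => ⟨S ⟨h, hh⟩, fun t x => by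
    rw [inner_adjoint_apply (hS.mono (hT t).1) ⟨h, (hT t).1 hh⟩ x,
      (hT t).2 (x := ⟨h, hh⟩) (y := ⟨h, (hT t).1 hh⟩) rfl]⟩

namespace IsSelfAdjoint

variable {A : H →ₗ.[ℂ] H}

theorem isFormalAdjoint (hA : IsSelfAdjoint A) : A.IsFormalAdjoint A := by
  have h := adjoint_isFormalAdjoint hA.dense_domain
  rwa [isSelfAdjoint_def.mp hA] at h

theorem exists_inner_apply_ne_zero_of_eq_add_I_smul (hA : IsSelfAdjoint A)
    {T : H →ₗ.[ℂ] H} (hdom : T.domain = A.domain)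
    (hT : ∀ (x : H) (hx : x ∈ T.domain) (hx' : x ∈ A.domain), T ⟨x, hx⟩ = A ⟨x, hx'⟩ + I • x)
    {e : H} (he : e ≠ 0) : ∃ x : T.domain, ⟪e, T x⟫_ℂ ≠ 0 := by
  by_contra! h
  have hpair : ∀ x : A.domain, ⟪I • e, (x : H)⟫_ℂ = ⟪e, A x⟫_ℂ := fun x => by
    have := h ⟨x, hdom.ge x.2⟩
    rw [hT x _ x.2, inner_add_I_smul, sub_eq_zero] at this
    exact this.symm
  have he' : e ∈ A†.domain := mem_adjoint_domain_of_exists _ ⟨I • e, hpair⟩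
  have hAe : A† ⟨e, he'⟩ = I • e := adjoint_apply_eq hA.dense_domain _ hpair
  have hle : A† ≤ A := (isSelfAdjoint_def.mp hA).le
  exact he (hA.isFormalAdjoint.eq_zero_of_apply_eq_I_smul (x := ⟨e, hle.1 he'⟩)
    ((hle.2 rfl).symm.trans hAe))

end IsSelfAdjoint

end Adjoint

open scoped Classical in
theorem stmt_10_general {H : Type*} [NormedAddCommGroup H] [InnerProductSpace ℂ H]
    [CompleteSpace H]
    (A₀ A₁ : H →ₗ.[ℂ] H)
    (hd₀ : Dense (A₀.domain : Set H))
    (hext : A₀ ≤ A₁) (hsa₁ : IsSelfAdjoint A₁)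
    (e : H) (he : ‖e‖ = 1)
    (hedom : e ∈ A₀.adjoint.domain)
    (heeq : A₀.adjoint ⟨e, hedom⟩ = Complex.I • e)
    (T₁ : H →ₗ.[ℂ] H) (hT₁dom : T₁.domain = A₁.domain)
    (hT₁ : ∀ (x : H) (hx : x ∈ T₁.domain) (hx' : x ∈ A₁.domain),
      T₁ ⟨x, hx⟩ = A₁ ⟨x, hx'⟩ + Complex.I • x)
    (K : H →L[ℂ] H) (hK : ∀ x : H, K x = x + (inner ℂ e x : ℂ) • e)
    (T₂ : H →ₗ.[ℂ] H) (hT₂dom : T₂.domain = T₁.domain)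
    (hT₂ : ∀ (x : H) (hx : x ∈ T₂.domain) (hx' : x ∈ T₁.domain),
      T₂ ⟨x, hx⟩ = K (T₁ ⟨x, hx'⟩))
    (𝔈 : Set ℝ) (h𝔈 : ¬ NullMeasurableSet 𝔈 (volume : Measure ℝ)) :
    (∀ t : ℝ,
      Dense (((if t ∈ 𝔈 then T₁.adjoint else T₂.adjoint) : H →ₗ.[ℂ] H).domain : Set H) ∧
      ((if t ∈ 𝔈 then T₁.adjoint else T₂.adjoint) : H →ₗ.[ℂ] H).IsClosed) ∧
    WeakMeasFam (fun t => if t ∈ 𝔈 then T₁.adjoint else T₂.adjoint) ∧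
    ¬ WeakMeasFam (fun t =>
        ((if t ∈ 𝔈 then T₁.adjoint else T₂.adjoint) : H →ₗ.[ℂ] H).adjoint) := by
  have hee : ⟪e, e⟫_ℂ = 1 := by simp [inner_self_eq_norm_sq_to_K, he]
  have hdT₁ : Dense (T₁.domain : Set H) := hT₁dom ▸ hsa₁.dense_domain
  have hdT₂ : Dense (T₂.domain : Set H) := hT₂dom ▸ hdT₁
  have hdT₁' : Dense (T₁†.domain : Set H) := hsa₁.dense_domain.mono
    (domain_le_adjoint_domain_of_eq_add_smul hsa₁.isFormalAdjoint I hT₁dom hT₁)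
  have hdT₂' : Dense (T₂†.domain : Set H) := dense_adjoint_domain_of_eq_comp hdT₁ hdT₁'
    (isSymmetric_of_eq_add_inner_smul hK) (surjective_of_eq_add_inner_smul hK hee) hT₂dom hT₂
  have hfix : ∀ x : T₁.domain, (x : H) ∈ A₀.domain → K (T₁ x) = T₁ x := fun x hx => by
    have horth := inner_add_I_smul_eq_zero_of_adjoint_eq hd₀ hedom heeq ⟨x, hx⟩
    rw [hext.2 (y := ⟨x, hext.1 hx⟩) rfl, ← hT₁ x x.2] at horth
    rw [hK, horth, zero_smul, add_zero]
  have hdS : Dense ((T₁.domRestrict A₀.domain).domain : Set H) :=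
    hd₀.mono fun x hx => ⟨hx, hT₁dom.ge (hext.1 hx)⟩
  obtain ⟨x₀, hx₀⟩ := hsa₁.exists_inner_apply_ne_zero_of_eq_add_I_smul hT₁dom hT₁
    (e := e) (by rintro rfl; simp at he)
  have hfam : ∀ t, (if t ∈ 𝔈 then T₁† else T₂†) = (if t ∈ 𝔈 then T₁ else T₂)† := fun t =>
    (apply_ite (fun S : H →ₗ.[ℂ] H => S†) _ _ _).symm
  simp only [hfam]
  refine ⟨fun t => ?_, weakMeasFam_adjoint_of_le hdS fun t => ?_, fun hW => h𝔈 ?_⟩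
  · split_ifs
    exacts [⟨hdT₁', adjoint_isClosed hdT₁⟩, ⟨hdT₂', adjoint_isClosed hdT₂⟩]
  · split_ifs
    exacts [domRestrict_le, domRestrict_le_of_eq_comp hT₂dom hT₂ hfix]
  · have hW₀ := hW.mono (T := fun t => if t ∈ 𝔈 then T₁ else T₂) fun t => by
      split_ifs
      exacts [le_adjoint_adjoint hdT₁ hdT₁', le_adjoint_adjoint hdT₂ hdT₂']
    refine nullMeasurableSet_of_weakMeasFam_ite hW₀ (e := e) x₀.2 (hT₂dom.ge x₀.2) ?_
    rw [hT₂ _ _ x₀.2, inner_apply_of_eq_add_inner_smul hK hee]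
    exact fun h => hx₀ (by linear_combination -h)

open scoped Classical in
/-- With `A₀` densely defined closed symmetric, `A₁` a self-adjoint extension,
`e` a unit vector with `A₀⋆ e = i e`, `T₁ = A₁ + iI`, `K = I + ⟪e,·⟫e`, `T₂ = K T₁`, and `𝔈`
a non-Lebesgue-measurable set, the family `T̃ t = T₁⋆` on `𝔈`, `T₂⋆` off `𝔈`, consists of densely
defined closed operators, is weakly measurable, but the adjoint family `{T̃ t⋆}` is not weakly
measurable. -/
theorem stmt_10 {H : Type*} [NormedAddCommGroup H] [InnerProductSpace ℂ H]
    [CompleteSpace H] [TopologicalSpace.SeparableSpace H]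
    (A₀ A₁ : H →ₗ.[ℂ] H)
    (hd₀ : Dense (A₀.domain : Set H)) (hc₀ : A₀.IsClosed) (hs₀ : IsSymmPMap A₀)
    (hext : A₀ ≤ A₁) (hsa₁ : IsSelfAdjoint A₁)
    (e : H) (he : ‖e‖ = 1)
    (hedom : e ∈ A₀.adjoint.domain)
    (heeq : A₀.adjoint ⟨e, hedom⟩ = Complex.I • e)
    (T₁ : H →ₗ.[ℂ] H) (hT₁dom : T₁.domain = A₁.domain)
    (hT₁ : ∀ (x : H) (hx : x ∈ T₁.domain) (hx' : x ∈ A₁.domain),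
      T₁ ⟨x, hx⟩ = A₁ ⟨x, hx'⟩ + Complex.I • x)
    (K : H →L[ℂ] H) (hK : ∀ x : H, K x = x + (inner ℂ e x : ℂ) • e)
    (T₂ : H →ₗ.[ℂ] H) (hT₂dom : T₂.domain = T₁.domain)
    (hT₂ : ∀ (x : H) (hx : x ∈ T₂.domain) (hx' : x ∈ T₁.domain),
      T₂ ⟨x, hx⟩ = K (T₁ ⟨x, hx'⟩))
    (𝔈 : Set ℝ) (h𝔈 : ¬ NullMeasurableSet 𝔈 (volume : Measure ℝ)) :
    (∀ t : ℝ,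
      Dense (((if t ∈ 𝔈 then T₁.adjoint else T₂.adjoint) : H →ₗ.[ℂ] H).domain : Set H) ∧
      ((if t ∈ 𝔈 then T₁.adjoint else T₂.adjoint) : H →ₗ.[ℂ] H).IsClosed) ∧
    WeakMeasFam (fun t => if t ∈ 𝔈 then T₁.adjoint else T₂.adjoint) ∧
    ¬ WeakMeasFam (fun t =>
        ((if t ∈ 𝔈 then T₁.adjoint else T₂.adjoint) : H →ₗ.[ℂ] H).adjoint) :=
  stmt_10_general A₀ A₁ hd₀ hext hsa₁ e he hedom heeq T₁ hT₁dom hT₁ K hK T₂ hT₂dom hT₂ 𝔈 h𝔈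

end
end

section
/- Let H be a separable complex Hilbert space and let {T(t)}_{t∈ℝ} be a weakly measurable family of densely defined closed linear operators in H. Suppose in addition that the maximally defined operator 𝒯 in L²(ℝ; H) is densely defined. Then the family of adjoints {T(t)*}_{t∈ℝ} is weakly measurable. -/
open MeasureTheory

noncomputable section

variable {H : Type*} [NormedAddCommGroup H] [InnerProductSpace ℂ H]

/-!
Density of `dom 𝒯` in `L²(ℝ; H)` yields countably many `gᵢ ∈ dom 𝒯` whose values `gᵢ(t)` are
dense in `H` for almost every `t`. For `f(t) ∈ dom T(t)*` the functions
`t ↦ ⟪gᵢ(t), T(t)* f(t)⟫ = ⟪(𝒯 gᵢ)(t), f(t)⟫` are measurable, and `⟪h, T(t)* f(t)⟫` is their limit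
along indices `iₖ(t)`, chosen measurably, with `g_{iₖ(t)}(t) → h`.
-/

section

open Filter Topology Set TopologicalSpace
open scoped ENNReal

variable {α : Type*} [MeasurableSpace α] {μ : Measure α}

theorem Dense.exists_seq_ae_denseRange {F : Type*} [NormedAddCommGroup F] [SeparableSpace F]
    {p : ℝ≥0∞} [Fact (1 ≤ p)] [SigmaFinite μ]
    {D : Set (Lp F p μ)} (hD : Dense D) :
    ∃ g : ℕ → Lp F p μ, (∀ i, g i ∈ D) ∧ ∀ᵐ t ∂μ, DenseRange fun i => g i t := by
  let q : ℕ → ℕ → Lp F p μ := fun m n => indicatorConstLp p (measurableSet_spanningSets μ n)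
    (measure_spanningSets_lt_top μ n).ne (denseSeq F m)
  have hq : ∀ m n, ∀ᵐ t ∂μ, t ∈ spanningSets μ n → q m n t = denseSeq F m :=
    fun m n => indicatorConstLp_coeFn_mem
  have approx : ∀ m n, ∃ G : ℕ → Lp F p μ, (∀ j, G j ∈ D) ∧
      ∀ᵐ t ∂μ, Tendsto (fun j => G j t) atTop (𝓝 (q m n t)) := by
    intro m n
    obtain ⟨G, hGD, hGlim⟩ := mem_closure_iff_seq_limit.1 (hD.closure_eq ▸ mem_univ (q m n))
    obtain ⟨φ, -, hφ⟩ := (tendstoInMeasure_of_tendsto_Lp hGlim).exists_seq_tendsto_ae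
    exact ⟨G ∘ φ, fun j => hGD (φ j), hφ⟩
  choose G hGD hGlim using approx
  let e := Denumerable.eqv (ℕ × ℕ × ℕ)
  refine ⟨fun i => G (e.symm i).1 (e.symm i).2.1 (e.symm i).2.2, fun i => hGD _ _ _, ?_⟩
  filter_upwards [ae_all_iff.2 fun m => ae_all_iff.2 (hGlim m),
    ae_all_iff.2 fun m => ae_all_iff.2 (hq m)] with t hlim hqt
  obtain ⟨n, hn⟩ := mem_iUnion.1 (iUnion_spanningSets μ ▸ mem_univ t)
  have hsub : ∀ m, denseSeq F m ∈ closure (range fun i =>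
      G (e.symm i).1 (e.symm i).2.1 (e.symm i).2.2 t) := fun m =>
    mem_closure_of_tendsto (hqt m n hn ▸ hlim m n)
      (Eventually.of_forall fun j => ⟨e (m, n, j), by simp⟩)
  exact dense_closure.1 ((denseRange_denseSeq F).mono (range_subset_iff.2 hsub))

theorem exists_measurable_index_tendsto {E : Type*} [PseudoMetricSpace E] {u : ℕ → α → E}
    (hu : ∀ i, StronglyMeasurable (u i)) (h : E) :
    ∃ σ : ℕ → α → ℕ, (∀ k, Measurable (σ k)) ∧
      ∀ t, h ∈ closure (range fun i => u i t) → Tendsto (fun k => u (σ k t) t) atTop (𝓝 h) := by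
  classical
  -- the second disjunct makes `Nat.find` total at points where `h` is not approximated
  let P : ℕ → α → ℕ → Prop := fun k t i =>
    dist (u i t) h < 1 / (k + 1) ∨ ∀ j, ¬ dist (u j t) h < 1 / (k + 1)
  have hP : ∀ k t, ∃ i, P k t i := fun k t =>
    (em (∃ i, dist (u i t) h < 1 / (k + 1))).elim (fun ⟨i, hi⟩ => ⟨i, .inl hi⟩)
      fun hno => ⟨0, .inr (not_exists.1 hno)⟩
  have hdist : ∀ j, Measurable fun t => dist (u j t) h :=
    fun j => ((hu j).dist stronglyMeasurable_const).measurable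
  refine ⟨fun k t => Nat.find (hP k t), fun k => measurable_find _ fun i => ?_, fun t ht => ?_⟩
  · simp only [P, ofPred_or, ofPred_forall]
    exact (measurableSet_lt (hdist i) measurable_const).union
      (MeasurableSet.iInter fun j => (measurableSet_lt (hdist j) measurable_const).compl)
  · have close : ∀ k, dist (u (Nat.find (hP k t)) t) h < 1 / (k + 1) := fun k =>
      (Nat.find_spec (hP k t)).resolve_right fun hno => by
        obtain ⟨i, hi⟩ := Metric.mem_closure_range_iff.1 ht (1 / (k + 1)) Nat.one_div_pos_of_nat
        exact hno i (dist_comm h (u i t) ▸ hi)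
    exact tendsto_iff_dist_tendsto_zero.2 (squeeze_zero (fun _ => dist_nonneg)
      (fun k => (close k).le) tendsto_one_div_add_atTop_nhds_zero_nat)

section InnerProductSpace

variable {𝕜 E : Type*} [RCLike 𝕜] [NormedAddCommGroup E] [InnerProductSpace 𝕜 E]

theorem MeasureTheory.AEStronglyMeasurable.aemeasurable_inner_of_weakly {u v : α → E}
    (hu : AEStronglyMeasurable u μ) (hv : ∀ h : E, AEMeasurable (fun t => inner 𝕜 h (v t)) μ) :
    AEMeasurable (fun t => inner 𝕜 (u t) (v t)) μ := by
  have simple : ∀ s : SimpleFunc α E, AEMeasurable (fun t => inner 𝕜 (s t) (v t)) μ := by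
    intro s
    induction s using SimpleFunc.induction with
    | @const c A hA =>
      convert (hv c).indicator hA using 1
      ext t
      by_cases ht : t ∈ A <;> simp [ht]
    | add _ hf hg =>
      simp only [SimpleFunc.coe_add, Pi.add_apply, inner_add_left]
      exact hf.add hg
  have hmk := hu.stronglyMeasurable_mk
  refine (aemeasurable_of_tendsto_metrizable_ae atTop (fun n => simple (hmk.approx n))
    (ae_of_all _ fun t => (hmk.tendsto_approx t).inner tendsto_const_nhds)).congr ?_
  filter_upwards [hu.ae_eq_mk] with t ht
  rw [ht]

theorem aemeasurable_inner_of_ae_denseRange {u : ℕ → α → E}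
    (hu : ∀ i, AEStronglyMeasurable (u i) μ) (hdense : ∀ᵐ t ∂μ, DenseRange fun i => u i t)
    {F : α → E} (hF : ∀ i, AEMeasurable (fun t => inner 𝕜 (u i t) (F t)) μ) (h : E) :
    AEMeasurable (fun t => inner 𝕜 h (F t)) μ := by
  obtain ⟨σ, hσ, hlim⟩ := exists_measurable_index_tendsto (fun i => (hu i).stronglyMeasurable_mk) h
  let φ i := (hF i).mk
  have hmeas : ∀ k, Measurable fun t => φ (σ k t) t := fun k =>
    (measurable_from_prod_countable_left (f := fun p : α × ℕ => φ p.2 p.1)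
      fun i => (hF i).measurable_mk).comp (measurable_id.prodMk (hσ k))
  refine aemeasurable_of_tendsto_metrizable_ae atTop (fun k => (hmeas k).aemeasurable) ?_
  filter_upwards [hdense, ae_all_iff.2 fun i => (hu i).ae_eq_mk,
    ae_all_iff.2 fun i => (hF i).ae_eq_mk] with t hdt hut hFt
  simp_rw [φ, ← hFt, hut] at hdt ⊢
  exact (hlim t (hdt h)).inner tendsto_const_nhds

end InnerProductSpace

end

theorem stmt_13_general {H : Type*} [NormedAddCommGroup H] [InnerProductSpace ℂ H]
    [CompleteSpace H] [TopologicalSpace.SeparableSpace H]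
    (T : ℝ → (H →ₗ.[ℂ] H))
    (hdense : ∀ t, Dense ((T t).domain : Set H))
    (𝒯 : Lp H 2 (volume : Measure ℝ) →ₗ.[ℂ] Lp H 2 (volume : Measure ℝ))
    (h𝒯 : ∀ f g : Lp H 2 (volume : Measure ℝ),
      ((f, g) ∈ 𝒯.graph ↔
        ∀ᵐ t ∂(volume : Measure ℝ),
          ∃ hft : f t ∈ (T t).domain, T t ⟨f t, hft⟩ = g t))
    (h𝒯dense : Dense (𝒯.domain : Set (Lp H 2 (volume : Measure ℝ)))) :
    WeakMeasFam (fun t => (T t).adjoint) := by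
  obtain ⟨g, hg𝒯, hg⟩ := h𝒯dense.exists_seq_ae_denseRange
  intro f hf h
  refine aemeasurable_inner_of_ae_denseRange (fun i => Lp.aestronglyMeasurable (g i)) hg
    (fun i => ?_) h
  have hgraph := (h𝒯 _ _).1 (𝒯.mem_graph ⟨g i, hg𝒯 i⟩)
  refine ((Lp.aestronglyMeasurable (𝒯 ⟨g i, hg𝒯 i⟩)).aemeasurable_inner_of_weakly hf).congr ?_
  filter_upwards [hgraph] with t ⟨hdom, hTg⟩
  rw [← hTg]
  exact ((T t).adjoint_isFormalAdjoint (hdense t)).symm ⟨g i t, hdom⟩ (f t)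

/-- If a weakly measurable family of densely defined closed operators has
densely defined maximal operator `𝒯` in `L²(ℝ; H)`, then the adjoint family is weakly
measurable. -/
theorem stmt_13 {H : Type*} [NormedAddCommGroup H] [InnerProductSpace ℂ H]
    [CompleteSpace H] [TopologicalSpace.SeparableSpace H]
    (T : ℝ → (H →ₗ.[ℂ] H))
    (hdense : ∀ t, Dense ((T t).domain : Set H)) (hclosed : ∀ t, (T t).IsClosed)
    (hmeas : WeakMeasFam T)
    (𝒯 : Lp H 2 (volume : Measure ℝ) →ₗ.[ℂ] Lp H 2 (volume : Measure ℝ))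
    (h𝒯 : ∀ f g : Lp H 2 (volume : Measure ℝ),
      ((f, g) ∈ 𝒯.graph ↔
        ∀ᵐ t ∂(volume : Measure ℝ),
          ∃ hft : f t ∈ (T t).domain, T t ⟨f t, hft⟩ = g t))
    (h𝒯dense : Dense (𝒯.domain : Set (Lp H 2 (volume : Measure ℝ)))) :
    WeakMeasFam (fun t => (T t).adjoint) :=
  stmt_13_general T hdense 𝒯 h𝒯 h𝒯dense
end
end

section
/- Let H be a separable complex Hilbert space, let {T(t)}_{t∈ℝ} be a weakly measurable family of densely defined closed linear operators in H, and let 𝒯 be the maximally defined operator in L²(ℝ; H). Define 𝒟 = {f ∈ L²(ℝ; H) : f(t) ∈ dom(T(t)) for a.e. t ∈ ℝ}. Then the closure of 𝒟 in L²(ℝ; H) equals the closure of dom(𝒯) in L²(ℝ; H). -/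
open MeasureTheory

noncomputable section

variable {H : Type*} [NormedAddCommGroup H] [InnerProductSpace ℂ H]

/-!
Clearly `dom 𝒯 ⊆ 𝒟`. Conversely, for `f ∈ 𝒟` the family `g(t) = T(t) f(t)` is weakly
measurable, hence strongly measurable by Pettis' theorem (expand `g(t)` in a Hilbert basis, which
is countable since `H` is separable). On `sₙ = {t | ‖g t‖ ≤ n ‖f t‖}` the truncation `1_{sₙ} f` has
`T(1_{sₙ} f) = 1_{sₙ} g ∈ L²`, so it lies in `dom 𝒯`; and `1_{sₙ} f → f` in `L²` by dominated
convergence, because the sets `sₙ` eventually contain every point where `f` does not vanish.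
-/

open Filter Metric TopologicalSpace
open scoped ENNReal Topology

theorem Orthonormal.countable {𝕜 E ι : Type*} [RCLike 𝕜] [NormedAddCommGroup E]
    [InnerProductSpace 𝕜 E] [SeparableSpace E] {v : ι → E} (hv : Orthonormal 𝕜 v) :
    Countable ι := by
  refine Pairwise.countable_of_isOpen_disjoint (s := fun i => ball (v i) (1 / 2))
    (fun i j hij => ball_disjoint_ball ?_) (fun _ => isOpen_ball)
    (fun _ => nonempty_ball.2 one_half_pos)
  have hsq : dist (v i) (v j) ^ 2 = 2 := by
    rw [dist_eq_norm, @norm_sub_sq 𝕜, hv.norm_eq_one, hv.norm_eq_one, hv.inner_eq_zero hij]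
    norm_num
  nlinarith [dist_nonneg (x := v i) (y := v j)]

theorem aestronglyMeasurable_of_aemeasurable_inner {𝕜 E α : Type*} [RCLike 𝕜]
    [NormedAddCommGroup E] [InnerProductSpace 𝕜 E] [CompleteSpace E] [SeparableSpace E]
    [MeasurableSpace α] {μ : Measure α} {g : α → E}
    (hg : ∀ h : E, AEMeasurable (fun t => inner 𝕜 h (g t)) μ) :
    AEStronglyMeasurable g μ := by
  obtain ⟨w, b, hb⟩ := exists_hilbertBasis 𝕜 E
  have : Countable w := b.orthonormal.countable
  refine aestronglyMeasurable_of_tendsto_ae atTop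
    (f := fun s t => ∑ i ∈ s, inner 𝕜 (b i) (g t) • b i)
    (fun s => Finset.aestronglyMeasurable_fun_sum s fun i _ =>
      (hg (b i)).aestronglyMeasurable.smul_const (b i))
    (Eventually.of_forall fun t => ?_)
  have hsum := b.hasSum_repr (g t)
  simp only [b.repr_apply_apply] at hsum
  exact hsum

section DominatedLp

variable {α E : Type*} [MeasurableSpace α] {μ : Measure α} [NormedAddCommGroup E]
  {p : ℝ≥0∞}

theorem tendsto_eLpNorm_zero_of_dominated (hp0 : p ≠ 0) (hp : p ≠ ∞) {F : ℕ → α → E}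
    {bound : α → ℝ} (hF : ∀ n, AEStronglyMeasurable (F n) μ) (hbound : MemLp bound p μ)
    (h_le : ∀ n, ∀ᵐ t ∂μ, ‖F n t‖ ≤ bound t)
    (h_lim : ∀ᵐ t ∂μ, Tendsto (fun n => F n t) atTop (𝓝 0)) :
    Tendsto (fun n => eLpNorm (F n) p μ) atTop (𝓝 0) := by
  have hp_pos : 0 < p.toReal := ENNReal.toReal_pos hp0 hp
  have hint : Tendsto (fun n => ∫⁻ t, ‖F n t‖ₑ ^ p.toReal ∂μ) atTop (𝓝 0) := by
    simpa [ENNReal.zero_rpow_of_pos hp_pos] using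
      tendsto_lintegral_of_dominated_convergence' (fun t => ‖bound t‖ₑ ^ p.toReal)
        (fun n => (hF n).enorm.pow_const _)
        (fun n => (h_le n).mono fun t ht =>
          ENNReal.rpow_le_rpow (enorm_le_iff_norm_le.2 (ht.trans (Real.le_norm_self _)))
            hp_pos.le)
        (lintegral_rpow_enorm_lt_top_of_eLpNorm_lt_top hp0 hp hbound.2).ne
        (h_lim.mono fun t ht =>
          (ENNReal.continuous_rpow_const.tendsto _).comp ((continuous_enorm.tendsto _).comp ht))
  have hroot := (ENNReal.continuous_rpow_const (y := 1 / p.toReal)).tendsto 0 |>.comp hint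
  rw [ENNReal.zero_rpow_of_pos (by positivity)] at hroot
  simp_rw [eLpNorm_eq_lintegral_rpow_enorm_toReal hp0 hp]
  exact hroot

theorem MeasureTheory.Lp.tendsto_toLp_indicator [Fact (1 ≤ p)] (hp : p ≠ ∞) (f : Lp E p μ)
    {s : ℕ → Set α} (hs : ∀ n, MeasurableSet (s n))
    (hf : ∀ᵐ t ∂μ, ∀ᶠ n in atTop, (s n).indicator f t = f t) :
    Tendsto (fun n => ((Lp.memLp f).indicator (hs n)).toLp _) atTop (𝓝 f) := by
  conv_rhs => rw [← Lp.toLp_coeFn f (Lp.memLp f)]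
  rw [Lp.tendsto_Lp_iff_tendsto_eLpNorm'']
  refine tendsto_eLpNorm_zero_of_dominated (one_pos.trans_le Fact.out).ne' hp
    (fun n => ((Lp.aestronglyMeasurable f).indicator (hs n)).sub (Lp.aestronglyMeasurable f))
    (Lp.memLp f).norm (fun n => Eventually.of_forall fun t => ?_)
    (hf.mono fun t ht => tendsto_const_nhds.congr' (ht.mono fun n hn => by simp [hn]))
  by_cases ht : t ∈ s n <;> simp [ht]

end DominatedLp

section MaximalOperator

variable {T : ℝ → H →ₗ.[ℂ] H}

theorem WeakMeasFam.exists_stronglyMeasurable_apply [CompleteSpace H] [SeparableSpace H]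
    (hmeas : WeakMeasFam T) {f : ℝ → H} (hf_meas : AEStronglyMeasurable f volume)
    (hf : ∀ᵐ t, f t ∈ (T t).domain) :
    ∃ g : ℝ → H, StronglyMeasurable g ∧
      ∀ᵐ t, ∃ h : f t ∈ (T t).domain, T t ⟨f t, h⟩ = g t := by
  classical
  let F : (t : ℝ) → (T t).domain := fun t => if h : f t ∈ (T t).domain then ⟨f t, h⟩ else 0
  have hF : ∀ᵐ t, (F t : H) = f t := hf.mono fun t ht => by simp [F, ht]
  have hTF : AEStronglyMeasurable (fun t => T t (F t)) volume :=
    aestronglyMeasurable_of_aemeasurable_inner <| hmeas F fun h =>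
      ((aestronglyMeasurable_const (b := h)).inner hf_meas).aemeasurable.congr
        (hF.mono fun _ ht => congrArg (inner ℂ h) ht.symm)
  refine ⟨hTF.mk _, hTF.stronglyMeasurable_mk, ?_⟩
  filter_upwards [hf, hTF.ae_eq_mk] with t ht hgt
  exact ⟨ht, by simpa [F, ht] using hgt⟩

def IsMaximalOp (T : ℝ → H →ₗ.[ℂ] H)
    (𝒯 : Lp H 2 (volume : Measure ℝ) →ₗ.[ℂ] Lp H 2 (volume : Measure ℝ)) : Prop :=
  ∀ f g : Lp H 2 (volume : Measure ℝ),
    (f, g) ∈ 𝒯.graph ↔ ∀ᵐ t, ∃ hft : f t ∈ (T t).domain, T t ⟨f t, hft⟩ = g t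

namespace IsMaximalOp

variable {𝒯 : Lp H 2 (volume : Measure ℝ) →ₗ.[ℂ] Lp H 2 (volume : Measure ℝ)}
  (h𝒯 : IsMaximalOp T 𝒯)
include h𝒯

theorem ae_mem_domain {f : Lp H 2 (volume : Measure ℝ)} (hf : f ∈ 𝒯.domain) :
    ∀ᵐ t, f t ∈ (T t).domain :=
  ((h𝒯 f _).1 (𝒯.mem_graph ⟨f, hf⟩)).mono fun _ ⟨h, _⟩ => h

theorem mem_domain {f : Lp H 2 (volume : Measure ℝ)} {g : ℝ → H} (hg : MemLp g 2 volume)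
    (hfg : ∀ᵐ t, ∃ h : f t ∈ (T t).domain, T t ⟨f t, h⟩ = g t) : f ∈ 𝒯.domain :=
  LinearPMap.mem_domain_of_mem_graph <| (h𝒯 f (hg.toLp g)).2 <| by
    filter_upwards [hfg, hg.coeFn_toLp] with t ht hgt
    rwa [hgt]

theorem toLp_indicator_mem_domain {f : Lp H 2 (volume : Measure ℝ)} {g : ℝ → H}
    (hg : AEStronglyMeasurable g volume)
    (hfg : ∀ᵐ t, ∃ h : f t ∈ (T t).domain, T t ⟨f t, h⟩ = g t) {s : Set ℝ}
    (hs : MeasurableSet s) {c : ℝ} (hc : 0 ≤ c) (hsg : ∀ t ∈ s, ‖g t‖ ≤ c * ‖f t‖) :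
    ((Lp.memLp f).indicator hs).toLp _ ∈ 𝒯.domain := by
  refine h𝒯.mem_domain (g := s.indicator g) ?_ ?_
  · refine (Lp.memLp f).of_le_mul (c := c) (hg.indicator hs) (Eventually.of_forall fun t => ?_)
    by_cases ht : t ∈ s
    · simpa only [Set.indicator_of_mem ht] using hsg t ht
    · simp only [Set.indicator_of_notMem ht, norm_zero]
      positivity
  · filter_upwards [hfg, ((Lp.memLp f).indicator hs).coeFn_toLp] with t ht hft
    by_cases hts : t ∈ s
    · simpa [hft, hts] using ht
    · simp only [hft, Set.indicator_of_notMem hts]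
      exact ⟨zero_mem _, (T t).map_zero⟩

theorem mem_closure_domain [CompleteSpace H] [SeparableSpace H] (hmeas : WeakMeasFam T)
    {f : Lp H 2 (volume : Measure ℝ)} (hf : ∀ᵐ t, f t ∈ (T t).domain) :
    f ∈ closure (𝒯.domain : Set _) := by
  obtain ⟨g, hg, hfg⟩ := hmeas.exists_stronglyMeasurable_apply (Lp.aestronglyMeasurable f) hf
  let s : ℕ → Set ℝ := fun n => {t | ‖g t‖ ≤ n * ‖f t‖}
  have hs : ∀ n, MeasurableSet (s n) := fun n =>
    measurableSet_le hg.norm.measurable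
      (measurable_const.mul (Lp.stronglyMeasurable f).norm.measurable)
  have hs_exhaust : ∀ t, ∀ᶠ n in atTop, (s n).indicator f t = f t := by
    intro t
    by_cases h0 : f t = 0
    · simp [h0]
    obtain ⟨N, hN⟩ := exists_nat_ge (‖g t‖ / ‖f t‖)
    filter_upwards [eventually_ge_atTop N] with n hn
    refine Set.indicator_of_mem (s := s n) ?_ f
    show ‖g t‖ ≤ n * ‖f t‖
    rw [← div_le_iff₀ (norm_pos_iff.2 h0)]
    exact hN.trans (by exact_mod_cast hn)
  exact mem_closure_of_tendsto
    (Lp.tendsto_toLp_indicator ENNReal.ofNat_ne_top f hs (Eventually.of_forall hs_exhaust))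
    (Eventually.of_forall fun n =>
      h𝒯.toLp_indicator_mem_domain hg.aestronglyMeasurable hfg (hs n) n.cast_nonneg
        fun _ ht => ht)

end IsMaximalOp

end MaximalOperator

theorem stmt_14_general {H : Type*} [NormedAddCommGroup H] [InnerProductSpace ℂ H]
    [CompleteSpace H] [TopologicalSpace.SeparableSpace H]
    (T : ℝ → (H →ₗ.[ℂ] H))
    (hmeas : WeakMeasFam T)
    (𝒯 : Lp H 2 (volume : Measure ℝ) →ₗ.[ℂ] Lp H 2 (volume : Measure ℝ))
    (h𝒯 : ∀ f g : Lp H 2 (volume : Measure ℝ),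
      ((f, g) ∈ 𝒯.graph ↔
        ∀ᵐ t ∂(volume : Measure ℝ),
          ∃ hft : f t ∈ (T t).domain, T t ⟨f t, hft⟩ = g t)) :
    closure {f : Lp H 2 (volume : Measure ℝ) |
        ∀ᵐ t ∂(volume : Measure ℝ), f t ∈ (T t).domain}
      = closure (𝒯.domain : Set (Lp H 2 (volume : Measure ℝ))) :=
  (closure_minimal (fun _ => IsMaximalOp.mem_closure_domain h𝒯 hmeas) isClosed_closure).antisymm
    (closure_mono fun _ => IsMaximalOp.ae_mem_domain h𝒯)

/-- For a weakly measurable family of densely defined closed operators with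
maximal operator `𝒯` in `L²(ℝ; H)`, the closure of
`𝒟 = {f ∈ L²(ℝ; H) : f t ∈ dom (T t) a.e.}` equals the closure of `dom 𝒯`. -/
theorem stmt_14 {H : Type*} [NormedAddCommGroup H] [InnerProductSpace ℂ H]
    [CompleteSpace H] [TopologicalSpace.SeparableSpace H]
    (T : ℝ → (H →ₗ.[ℂ] H))
    (hdense : ∀ t, Dense ((T t).domain : Set H)) (hclosed : ∀ t, (T t).IsClosed)
    (hmeas : WeakMeasFam T)
    (𝒯 : Lp H 2 (volume : Measure ℝ) →ₗ.[ℂ] Lp H 2 (volume : Measure ℝ))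
    (h𝒯 : ∀ f g : Lp H 2 (volume : Measure ℝ),
      ((f, g) ∈ 𝒯.graph ↔
        ∀ᵐ t ∂(volume : Measure ℝ),
          ∃ hft : f t ∈ (T t).domain, T t ⟨f t, hft⟩ = g t)) :
    closure {f : Lp H 2 (volume : Measure ℝ) |
        ∀ᵐ t ∂(volume : Measure ℝ), f t ∈ (T t).domain}
      = closure (𝒯.domain : Set (Lp H 2 (volume : Measure ℝ))) :=
  stmt_14_general T hmeas 𝒯 h𝒯

end
end
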